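/- arXiv:0708.4059 — 6 statements merged into one kernel-verified Lean document; each statement's English description precedes it below -/
import Mathlib

section
/- If F is a subexponential distribution function on (0,∞) (i.e., the tail of the n-fold convolution satisfies lim_{x→∞} (1-F^{*n}(x))/(1-F(x)) = n for all n ≥ 2), then for i.i.d. random variables X₁,…,Xₙ with distribution F, lim_{x→∞} P[X₁+⋯+Xₙ > x] / P[max(X₁,…,Xₙ) > x] = 1. -/
open MeasureTheory ProbabilityTheory Filter Set Asymptotics
open scoped Classical

/-- Tail of a distribution (measure) on `ℝ`: `F̄(x) = μ(x,∞)`. -/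
noncomputable def tailP (μ : Measure ℝ) (x : ℝ) : ℝ := (μ (Set.Ioi x)).toReal

/-- Tail of the `n`-fold convolution: `P[X₁+⋯+Xₙ > x]` for i.i.d. `Xᵢ ∼ μ`. -/
noncomputable def convTail (μ : Measure ℝ) (n : ℕ) (x : ℝ) : ℝ :=
  ((Measure.pi fun _ : Fin n => μ) {y | x < ∑ i, y i}).toReal

/-- A probability distribution on `(0,∞)` is subexponential if
`(1-F^{*n}(x))/(1-F(x)) → n` for all `n ≥ 2`. -/
def Subexponential (μ : Measure ℝ) : Prop :=
  IsProbabilityMeasure μ ∧ μ (Set.Ioi 0) = 1 ∧ (∀ x : ℝ, 0 < tailP μ x) ∧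
    ∀ n : ℕ, 2 ≤ n →
      Tendsto (fun x => convTail μ n x / tailP μ x) atTop (nhds (n : ℝ))

/-! The joint law of `X₁,…,Xₙ` is the product measure `μ^⊗n`, so the tail of the sum is
`convTail μ n`, while the tail of the maximum is
`1 - F(x)ⁿ = F̄(x) · ∑_{k<n} F(x)ᵏ ~ n F̄(x)`, since `F(x) → 1`.
Subexponentiality says that `convTail μ n ~ n F̄` as well. -/

open Topology Finset

lemma tailP_eq_one_sub_cdf (μ : Measure ℝ) [IsProbabilityMeasure μ] (x : ℝ) :
    tailP μ x = 1 - cdf μ x := by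
  rw [tailP, cdf_eq_real, ← compl_Iic, ← measureReal_def,
    probReal_compl_eq_one_sub measurableSet_Iic]

lemma convTail_one (μ : Measure ℝ) [SigmaFinite μ] : convTail μ 1 = tailP μ := by
  ext x
  have : {y : Fin 1 → ℝ | x < ∑ i, y i} = MeasurableEquiv.funUnique (Fin 1) ℝ ⁻¹' Ioi x := by
    ext y; simp
  rw [convTail, tailP, this]
  exact congrArg ENNReal.toReal ((measurePreserving_funUnique μ (Fin 1)).measure_preimage
    measurableSet_Ioi.nullMeasurableSet)

lemma Subexponential.tendsto_convTail_div_tailP {μ : Measure ℝ} (hμ : Subexponential μ) {n : ℕ}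
    (hn : 1 ≤ n) : Tendsto (fun x => convTail μ n x / tailP μ x) atTop (𝓝 (n : ℝ)) := by
  obtain ⟨hprob, -, htail_pos, hconv⟩ := hμ
  obtain rfl | hn2 := hn.eq_or_lt
  · simp_rw [convTail_one, div_self (htail_pos _).ne', Nat.cast_one]
    exact tendsto_const_nhds
  · exact hconv n hn2

lemma toReal_measure_pi_exists_lt (μ : Measure ℝ) [IsProbabilityMeasure μ] (n : ℕ) (x : ℝ) :
    ((Measure.pi fun _ : Fin n => μ) {y | ∃ i, x < y i}).toReal = 1 - cdf μ x ^ n := by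
  have hcompl : {y : Fin n → ℝ | ∃ i, x < y i} = (univ.pi fun _ => Iic x)ᶜ := by
    ext y; simp [Pi.le_def]
  rw [hcompl, ← measureReal_def, probReal_compl_eq_one_sub (.univ_pi fun _ => measurableSet_Iic),
    measureReal_def, Measure.pi_pi, Finset.prod_const, Finset.card_univ, Fintype.card_fin,
    ENNReal.toReal_pow, ← measureReal_def, cdf_eq_real]

lemma map_fun_eq_pi_of_iIndepFun {Ω ι : Type*} [Fintype ι] [MeasurableSpace Ω] {P : Measure Ω}
    [IsProbabilityMeasure P] {μ : Measure ℝ} {X : ι → Ω → ℝ} (hmeas : ∀ i, Measurable (X i))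
    (hindep : iIndepFun X P) (hlaw : ∀ i, P.map (X i) = μ) :
    P.map (fun ω i => X i ω) = Measure.pi fun _ => μ := by
  rw [(iIndepFun_iff_map_fun_eq_pi_map fun i => (hmeas i).aemeasurable).1 hindep]
  simp_rw [hlaw]

lemma tendsto_geom_sum_cdf (μ : Measure ℝ) (n : ℕ) :
    Tendsto (fun x => ∑ k ∈ range n, cdf μ x ^ k) atTop (𝓝 (n : ℝ)) := by
  simpa using tendsto_finsetSum (range n) fun k _ => (tendsto_cdf_atTop μ).pow k

/-- For i.i.d. `X₁,…,Xₙ` with subexponential distribution `F`,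
`P[X₁+⋯+Xₙ > x] / P[max(X₁,…,Xₙ) > x] → 1` as `x → ∞`. -/
theorem subexponential_sum_asymp_max
    {Ω : Type} [MeasurableSpace Ω] (P : Measure Ω) [IsProbabilityMeasure P]
    (μ : Measure ℝ) (hμ : Subexponential μ)
    (n : ℕ) (hn : 1 ≤ n) (X : Fin n → Ω → ℝ)
    (hmeas : ∀ i, Measurable (X i))
    (hindep : iIndepFun X P)
    (hlaw : ∀ i, Measure.map (X i) P = μ) :
    Tendsto (fun x =>
        (P {ω | x < ∑ i, X i ω}).toReal / (P {ω | ∃ i, x < X i ω}).toReal)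
      atTop (nhds 1) := by
  have := hμ.1
  have hjoint := map_fun_eq_pi_of_iIndepFun hmeas hindep hlaw
  have hX : Measurable fun ω i => X i ω := measurable_pi_lambda _ hmeas
  have hratio : ∀ x, (P {ω | x < ∑ i, X i ω}).toReal / (P {ω | ∃ i, x < X i ω}).toReal =
      convTail μ n x / tailP μ x / ∑ k ∈ range n, cdf μ x ^ k := by
    intro x
    have hsum : P {ω | x < ∑ i, X i ω} = (Measure.pi fun _ : Fin n => μ) {y | x < ∑ i, y i} := by
      rw [← hjoint, Measure.map_apply hX (measurableSet_lt measurable_const (by fun_prop))]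
      rfl
    have hmax : P {ω | ∃ i, x < X i ω} = (Measure.pi fun _ : Fin n => μ) {y | ∃ i, x < y i} := by
      rw [← hjoint, Measure.map_apply hX (s := {y : Fin n → ℝ | ∃ i, x < y i}) (by measurability)]
      rfl
    rw [hsum, hmax, toReal_measure_pi_exists_lt, ← mul_neg_geom_sum, ← tailP_eq_one_sub_cdf,
      div_div, convTail]
  simp_rw [hratio]
  have hn0 : (n : ℝ) ≠ 0 := by positivity
  rw [← div_self hn0]
  exact (hμ.tendsto_convTail_div_tailP hn).div (tendsto_geom_sum_cdf μ n) hn0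
end

section
/- (Kesten's bound) If F is subexponential, then for every ε > 0 there exists a finite constant K(ε) such that for all integers k ≥ 1 and all x ≥ 0, (1-F^{*k}(x)) ≤ K(ε)(1+ε)^k (1-F(x)). -/
open MeasureTheory ProbabilityTheory Filter Set Asymptotics
open scoped Classical

/-! Write `Cₙ(x) = P(X₁ + ⋯ + Xₙ > x)` and `F̄(x) = μ(x, ∞)`. Conditioning on the first summand,
for `x ≥ 0` we get `Cₙ₊₁(x) = ∫_{(0,x]} Cₙ(x - a) dμ(a) + F̄(x)`, since `Cₙ = 1` on `(-∞, 0)`.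
For `n = 1` and subexponential `μ` this gives `∫_{(0,x]} F̄(x - a) dμ(a) ≤ (1 + ε) F̄(x)` beyond
some `T`. Then `Cₙ₊₁ ≤ Kₙ F̄` on `[0, ∞)` by induction, where `K₀ = F̄(T)⁻¹` absorbs `x < T`
(there `Cₙ₊₁ ≤ 1 ≤ K₀ F̄(x)`) and `Kₙ₊₁ = 1 + (1 + ε) Kₙ`; solving the recursion,
`Kₙ + ε⁻¹ = (1 + ε)ⁿ (K₀ + ε⁻¹)`. -/

open scoped ENNReal NNReal

noncomputable def sumTail (μ : Measure ℝ) (n : ℕ) (x : ℝ) : ℝ≥0∞ :=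
  (Measure.pi fun _ : Fin n => μ) {y | x < ∑ i, y i}

section SumTail

variable {μ : Measure ℝ}

theorem sumTail_le_one [IsProbabilityMeasure μ] (n : ℕ) (x : ℝ) : sumTail μ n x ≤ 1 :=
  prob_le_one

theorem sumTail_one (x : ℝ) : sumTail μ 1 x = μ (Ioi x) := by
  rw [← (measurePreserving_funUnique μ (Fin 1)).measure_preimage
    measurableSet_Ioi.nullMeasurableSet]
  unfold sumTail
  congr 1 with y
  simp [MeasurableEquiv.funUnique]

theorem sumTail_succ [SigmaFinite μ] (n : ℕ) (x : ℝ) :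
    sumTail μ (n + 1) x = ∫⁻ a, sumTail μ n (x - a) ∂μ := by
  have hs : MeasurableSet {p : ℝ × (Fin n → ℝ) | x < p.1 + ∑ i, p.2 i} :=
    measurableSet_lt measurable_const (by fun_prop)
  have h := (measurePreserving_piFinSuccAbove (fun _ : Fin (n + 1) => μ) 0).measure_preimage
    hs.nullMeasurableSet
  have hpre : MeasurableEquiv.piFinSuccAbove (fun _ => ℝ) 0 ⁻¹'
      {p : ℝ × (Fin n → ℝ) | x < p.1 + ∑ i, p.2 i} = {y : Fin (n + 1) → ℝ | x < ∑ i, y i} := by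
    ext y
    simp [MeasurableEquiv.piFinSuccAbove, Fin.sum_univ_succ, Fin.tail]
  rw [hpre] at h
  rw [sumTail, h, Measure.prod_apply hs]
  congr 1 with a
  simp [sumTail, sub_lt_iff_lt_add']

variable [IsProbabilityMeasure μ]

theorem sumTail_eq_one_of_neg (hpos : ∀ᵐ a ∂μ, 0 < a) (n : ℕ) {x : ℝ} (hx : x < 0) :
    sumTail μ n x = 1 := by
  induction n generalizing x with
  | zero => simp [sumTail, hx]
  | succ n ih =>
    calc sumTail μ (n + 1) x = ∫⁻ _, 1 ∂μ := by
          rw [sumTail_succ]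
          exact lintegral_congr_ae (hpos.mono fun a ha => ih (by linarith))
      _ = 1 := by simp

theorem sumTail_succ_eq_setLIntegral_add (hpos : ∀ᵐ a ∂μ, 0 < a) (n : ℕ) {x : ℝ}
    (hx : 0 ≤ x) :
    sumTail μ (n + 1) x = (∫⁻ a in Ioc 0 x, sumTail μ n (x - a) ∂μ) + μ (Ioi x) := by
  calc sumTail μ (n + 1) x = ∫⁻ a in Ioi 0, sumTail μ n (x - a) ∂μ := by
        rw [sumTail_succ, Measure.restrict_eq_self_of_ae_mem (s := Ioi 0) hpos]
    _ = (∫⁻ a in Ioc 0 x, sumTail μ n (x - a) ∂μ) + ∫⁻ a in Ioi x, sumTail μ n (x - a) ∂μ := by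
        rw [← Ioc_union_Ioi_eq_Ioi hx, lintegral_union measurableSet_Ioi (Ioc_disjoint_Ioi le_rfl)]
    _ = (∫⁻ a in Ioc 0 x, sumTail μ n (x - a) ∂μ) + μ (Ioi x) := by
        rw [setLIntegral_congr_fun measurableSet_Ioi
          fun a ha => sumTail_eq_one_of_neg hpos n (sub_neg.2 ha), setLIntegral_one]

end SumTail

theorem Subexponential.ae_pos {μ : Measure ℝ} (hμ : Subexponential μ) : ∀ᵐ a ∂μ, 0 < a := by
  have := hμ.1
  exact (prob_compl_eq_zero_iff measurableSet_Ioi).2 hμ.2.1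

theorem Subexponential.eventually_setLIntegral_tail_le {μ : Measure ℝ} (hμ : Subexponential μ)
    {ε : ℝ≥0} (hε : 0 < ε) :
    ∀ᶠ x in atTop, ∫⁻ a in Ioc 0 x, μ (Ioi (x - a)) ∂μ ≤ (1 + ε) * μ (Ioi x) := by
  have hpos := hμ.ae_pos
  obtain ⟨_, -, htail, hlim⟩ := hμ
  have hlt : (2 : ℝ) < 2 + ε := by simpa using hε
  filter_upwards [(hlim 2 le_rfl).eventually (gt_mem_nhds hlt), eventually_ge_atTop 0]
    with x hratio hx
  have h2 : sumTail μ 2 x ≤ (1 + ε + 1) * μ (Ioi x) := by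
    refine (ENNReal.toReal_le_toReal ((sumTail_le_one 2 x).trans_lt ENNReal.one_lt_top).ne
      (by finiteness)).1 ?_
    calc (sumTail μ 2 x).toReal = convTail μ 2 x := rfl
      _ ≤ (2 + ε) * tailP μ x := ((div_lt_iff₀ (htail x)).1 hratio).le
      _ = ((1 + ε + 1) * μ (Ioi x)).toReal := by
        rw [ENNReal.toReal_mul, tailP, add_right_comm, one_add_one_eq_two]
        norm_cast
  rw [sumTail_succ_eq_setLIntegral_add hpos 1 hx] at h2
  simp only [sumTail_one, add_one_mul] at h2
  exact (ENNReal.add_le_add_iff_right (measure_ne_top _ _)).1 h2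

noncomputable def kestenSeq (c r : ℝ≥0∞) : ℕ → ℝ≥0∞
  | 0 => c
  | n + 1 => 1 + r * kestenSeq c r n

theorem le_kestenSeq {c r : ℝ≥0∞} (hr : 1 ≤ r) (n : ℕ) : c ≤ kestenSeq c r n := by
  induction n with
  | zero => rfl
  | succ n ih => exact ih.trans ((le_mul_of_one_le_left' hr).trans le_add_self)

theorem kestenSeq_add_inv (c : ℝ≥0∞) {ε : ℝ≥0∞} (h0 : ε ≠ 0) (htop : ε ≠ ∞) (n : ℕ) :
    kestenSeq c (1 + ε) n + ε⁻¹ = (1 + ε) ^ n * (c + ε⁻¹) := by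
  induction n with
  | zero => simp [kestenSeq]
  | succ n ih =>
    calc kestenSeq c (1 + ε) (n + 1) + ε⁻¹ = (1 + ε) * (kestenSeq c (1 + ε) n + ε⁻¹) := by
          rw [kestenSeq, mul_add (1 + ε), add_mul 1 ε ε⁻¹, one_mul, ENNReal.mul_inv_cancel h0 htop]
          ring
      _ = (1 + ε) ^ (n + 1) * (c + ε⁻¹) := by rw [ih, pow_succ', mul_assoc]

theorem sumTail_succ_le_kestenSeq_mul {μ : Measure ℝ} [IsProbabilityMeasure μ]
    (hpos : ∀ᵐ a ∂μ, 0 < a) {T : ℝ} {c r : ℝ≥0∞} (hr : 1 ≤ r) (hc : 1 ≤ c * μ (Ioi T))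
    (hT : ∀ x ≥ T, ∫⁻ a in Ioc 0 x, μ (Ioi (x - a)) ∂μ ≤ r * μ (Ioi x)) (n : ℕ) {x : ℝ}
    (hx : 0 ≤ x) : sumTail μ (n + 1) x ≤ kestenSeq c r n * μ (Ioi x) := by
  induction n generalizing x with
  | zero =>
    rw [sumTail_one]
    exact le_mul_of_one_le_left' (hc.trans (mul_le_of_le_one_right' prob_le_one))
  | succ n ih =>
    rcases lt_or_ge x T with hxT | hxT
    · calc sumTail μ (n + 2) x ≤ c * μ (Ioi T) := (sumTail_le_one _ _).trans hc
        _ ≤ kestenSeq c r (n + 1) * μ (Ioi x) :=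
          mul_le_mul' (le_kestenSeq hr _) (measure_mono (Ioi_subset_Ioi hxT.le))
    · have hmeas : Measurable fun a => μ (Ioi (x - a)) :=
        Antitone.measurable (fun _ _ h => measure_mono (Ioi_subset_Ioi h)) |>.comp
          (measurable_const.sub measurable_id)
      calc sumTail μ (n + 2) x
          = (∫⁻ a in Ioc 0 x, sumTail μ (n + 1) (x - a) ∂μ) + μ (Ioi x) :=
            sumTail_succ_eq_setLIntegral_add hpos _ hx
        _ ≤ (∫⁻ a in Ioc 0 x, kestenSeq c r n * μ (Ioi (x - a)) ∂μ) + μ (Ioi x) := by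
            gcongr ?_ + _
            exact setLIntegral_mono' measurableSet_Ioc fun a ha => ih (sub_nonneg.2 ha.2)
        _ = kestenSeq c r n * (∫⁻ a in Ioc 0 x, μ (Ioi (x - a)) ∂μ) + μ (Ioi x) := by
            rw [lintegral_const_mul _ hmeas]
        _ ≤ kestenSeq c r n * (r * μ (Ioi x)) + μ (Ioi x) := by gcongr; exact hT x hxT
        _ = kestenSeq c r (n + 1) * μ (Ioi x) := by rw [kestenSeq]; ring

theorem Subexponential.exists_sumTail_succ_le {μ : Measure ℝ} (hμ : Subexponential μ)
    {ε : ℝ≥0} (hε : 0 < ε) :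
    ∃ A : ℝ≥0∞, A ≠ 0 ∧ A ≠ ∞ ∧
      ∀ n : ℕ, ∀ x : ℝ, 0 ≤ x → sumTail μ (n + 1) x ≤ A * (1 + ε) ^ (n + 1) * μ (Ioi x) := by
  obtain ⟨T, hT⟩ := eventually_atTop.1 (hμ.eventually_setLIntegral_tail_le hε)
  have hpos := hμ.ae_pos
  obtain ⟨_, -, htail, -⟩ := hμ
  have hT0 : μ (Ioi T) ≠ 0 := fun h => (htail T).ne' (by simp [tailP, h])
  have hε0 : (ε : ℝ≥0∞) ≠ 0 := ENNReal.coe_ne_zero.2 hε.ne'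
  refine ⟨(μ (Ioi T))⁻¹ + (ε : ℝ≥0∞)⁻¹, by simp, by finiteness, fun n x hx => ?_⟩
  calc sumTail μ (n + 1) x ≤ kestenSeq (μ (Ioi T))⁻¹ (1 + ε) n * μ (Ioi x) :=
        sumTail_succ_le_kestenSeq_mul hpos le_self_add
          (ENNReal.inv_mul_cancel hT0 (measure_ne_top _ _)).ge hT n hx
    _ ≤ (1 + ε) ^ n * ((μ (Ioi T))⁻¹ + (ε : ℝ≥0∞)⁻¹) * μ (Ioi x) := by
        rw [← kestenSeq_add_inv _ hε0 ENNReal.coe_ne_top]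
        gcongr
        exact le_self_add
    _ ≤ ((μ (Ioi T))⁻¹ + (ε : ℝ≥0∞)⁻¹) * (1 + ε) ^ (n + 1) * μ (Ioi x) := by
        rw [mul_comm ((1 + (ε : ℝ≥0∞)) ^ n)]
        gcongr
        exacts [le_self_add, n.le_succ]

/-- Kesten's bound: if `F` is subexponential, then for every `ε > 0`
there is `K(ε) < ∞` with `1-F^{*k}(x) ≤ K(ε)(1+ε)^k (1-F(x))` for all `k ≥ 1`, `x ≥ 0`. -/
theorem kesten_bound (μ : Measure ℝ) (hμ : Subexponential μ) :
    ∀ ε : ℝ, 0 < ε → ∃ K : ℝ, 0 < K ∧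
      ∀ k : ℕ, 1 ≤ k → ∀ x : ℝ, 0 ≤ x →
        convTail μ k x ≤ K * (1 + ε) ^ k * tailP μ x := by
  have := hμ.1
  intro ε hε
  lift ε to ℝ≥0 using hε.le
  obtain ⟨A, hA0, hA, hbound⟩ := hμ.exists_sumTail_succ_le (NNReal.coe_pos.1 hε)
  refine ⟨A.toReal, ENNReal.toReal_pos hA0 hA, fun k hk x hx => ?_⟩
  obtain ⟨n, rfl⟩ := Nat.exists_eq_add_of_le' hk
  calc convTail μ (n + 1) x = (sumTail μ (n + 1) x).toReal := rfl
    _ ≤ (A * (1 + ε) ^ (n + 1) * μ (Ioi x)).toReal :=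
        ENNReal.toReal_mono (by finiteness) (hbound n x hx)
    _ = A.toReal * (1 + ε) ^ (n + 1) * tailP μ x := by simp [tailP, ENNReal.toReal_add]
end

section
/- Let X₁,…,Xₙ be independent nonnegative random variables with tail distributions F̄ᵢ, and suppose there is a subexponential distribution F such that F̄ᵢ(x) ∼ cᵢ F̄(x) as x → ∞ with cᵢ ≥ 0 and Σᵢ cᵢ > 0. Then P[X₁+⋯+Xₙ > x, and Xᵢ ≤ x for all 1 ≤ i ≤ n] = o(F̄(x)) as x → ∞. -/
/-!
Write `S = X₁ + ⋯ + Xₙ`. By nonnegativity, the event in question is `{S > x}` with the union of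
the events `{Xᵢ > x}` removed. By pairwise independence that union has probability at least
`∑ F̄ᵢ(x) - (∑ F̄ᵢ(x))² = (∑ cᵢ) F̄(x) + o(F̄(x))`, so it suffices that `P[S > x] ∼ (∑ cᵢ) F̄(x)`.

By induction this reduces to two independent summands `Y₁, Y₂` with tails `∼ c₁ F̄, c₂ F̄`. Fix a
large `h`. Either one summand exceeds `x - h`, which has probability `∼ (c₁ + c₂) F̄(x)` because
`F` is long-tailed (`F̄(x - h) ∼ F̄(x)`), or both exceed `h`. On the latter event the tails of the
`Yᵢ` are dominated by constant multiples of `F̄`, so its probability is at most a constant times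
the corresponding probability for two independent copies of `F`. That one is
`≤ F̄^{*2}(x) - 2 (1 - F̄(h)) F̄(x) = (2 F̄(h) + o(1)) F̄(x)` by subexponentiality, which is small
for large `h`.
-/

open MeasureTheory ProbabilityTheory Filter Set Asymptotics
open scoped Classical

open scoped ENNReal Topology

lemma tailP_antitone (μ : Measure ℝ) [IsFiniteMeasure μ] : Antitone (tailP μ) :=
  fun _ _ hxy => ENNReal.toReal_mono (measure_ne_top μ _) (measure_mono (Ioi_subset_Ioi hxy))

lemma tendsto_tailP_atTop (μ : Measure ℝ) [IsFiniteMeasure μ] :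
    Tendsto (tailP μ) atTop (𝓝 0) := by
  have h := tendsto_measure_iInter_atTop (μ := μ) (s := Ioi)
    (fun _ => measurableSet_Ioi.nullMeasurableSet) (fun _ _ hxy => Ioi_subset_Ioi hxy)
    ⟨0, measure_ne_top μ _⟩
  rw [show ⋂ x : ℝ, Ioi x = ∅ from iInter_eq_empty_iff.2 fun t => ⟨t, lt_irrefl t⟩,
    measure_empty] at h
  exact (ENNReal.tendsto_toReal ENNReal.zero_ne_top).comp h

lemma tendsto_zero_of_tendsto_div_tailP {μ : Measure ℝ} [IsFiniteMeasure μ]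
    (hpos : ∀ x, 0 < tailP μ x) {f : ℝ → ℝ} {c : ℝ}
    (hf : Tendsto (fun x => f x / tailP μ x) atTop (𝓝 c)) : Tendsto f atTop (𝓝 0) := by
  have h := hf.mul (tendsto_tailP_atTop μ)
  rw [mul_zero] at h
  exact h.congr fun x => div_mul_cancel₀ _ (hpos x).ne'

lemma measure_Ioc_toReal_add_tailP (μ : Measure ℝ) [IsFiniteMeasure μ] {x y : ℝ} (hxy : x ≤ y) :
    (μ (Ioc x y)).toReal + tailP μ y = tailP μ x := by
  rw [tailP, tailP, ← ENNReal.toReal_add (measure_ne_top μ _) (measure_ne_top μ _),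
    ← measure_union Ioc_disjoint_Ioi_same measurableSet_Ioi, Ioc_union_Ioi_eq_Ioi hxy]

lemma convTail_two (μ : Measure ℝ) [SigmaFinite μ] (x : ℝ) :
    convTail μ 2 x = ((μ.prod μ) {p : ℝ × ℝ | x < p.1 + p.2}).toReal := by
  have hS : MeasurableSet {p : ℝ × ℝ | x < p.1 + p.2} :=
    measurableSet_lt measurable_const (measurable_fst.add measurable_snd)
  rw [convTail, ← (measurePreserving_finTwoArrow μ).measure_preimage hS.nullMeasurableSet]
  congr 2
  ext y
  simp [Fin.sum_univ_two, MeasurableEquiv.finTwoArrow]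

lemma add_add_le_measure_of_disjoint {α : Type*} [MeasurableSpace α] (m : Measure α)
    {A B C D : Set α} (hB : MeasurableSet B) (hC : MeasurableSet C) (hAB : Disjoint A B)
    (hAC : Disjoint A C) (hBC : Disjoint B C) (hD : A ∪ B ∪ C ⊆ D) :
    m A + m B + m C ≤ m D := by
  rw [← measure_union hAB hB, ← measure_union (disjoint_union_left.2 ⟨hAC, hBC⟩) hC]
  exact measure_mono hD

lemma measure_rectangles_le_prod_sum_gt (μ : Measure ℝ) [SFinite μ] {x y : ℝ} (hyx : y ≤ x) :
    μ (Ioi x) * μ (Ioi 0) + μ (Ioc 0 y) * μ (Ioi x) + μ (Ioc y x) * μ (Ioi (x - y)) ≤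
      (μ.prod μ) {p : ℝ × ℝ | x < p.1 + p.2} := by
  simp only [← Measure.prod_prod]
  refine add_add_le_measure_of_disjoint _ (measurableSet_Ioc.prod measurableSet_Ioi)
    (measurableSet_Ioc.prod measurableSet_Ioi) (disjoint_left.2 fun p h₁ h₂ => ?_)
    (disjoint_left.2 fun p h₁ h₂ => ?_) (disjoint_left.2 fun p h₁ h₂ => ?_) fun p hp => ?_
  all_goals simp only [mem_union, mem_prod, mem_Ioi, mem_Ioc, mem_ofPred_eq] at *
  all_goals grind

def bothGtSumGt (h x : ℝ) : Set (ℝ × ℝ) := {p | h < p.1 ∧ h < p.2 ∧ x < p.1 + p.2}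

lemma measurableSet_bothGtSumGt (h x : ℝ) : MeasurableSet (bothGtSumGt h x) :=
  (measurableSet_lt measurable_const measurable_fst).inter
    ((measurableSet_lt measurable_const measurable_snd).inter
      (measurableSet_lt measurable_const (measurable_fst.add measurable_snd)))

lemma preimage_swap_bothGtSumGt (h x : ℝ) : Prod.swap ⁻¹' bothGtSumGt h x = bothGtSumGt h x := by
  ext ⟨t, s⟩
  simp only [bothGtSumGt, mem_preimage, Prod.swap_prod_mk, mem_ofPred_eq, add_comm s t]
  tauto

lemma preimage_mk_bothGtSumGt (h x t : ℝ) :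
    Prod.mk t ⁻¹' bothGtSumGt h x = if h < t then Ioi (max h (x - t)) else ∅ := by
  ext s
  split_ifs with ht
  · simp only [bothGtSumGt, mem_preimage, mem_ofPred_eq, ht, true_and, mem_Ioi, max_lt_iff,
      sub_lt_iff_lt_add']
  · simp [bothGtSumGt, ht]

lemma measure_prod_bothGtSumGt_comm (ν ν' : Measure ℝ) [SFinite ν] [SFinite ν'] (h x : ℝ) :
    (ν.prod ν') (bothGtSumGt h x) = (ν'.prod ν) (bothGtSumGt h x) := by
  rw [← Measure.prod_swap, Measure.map_apply measurable_swap (measurableSet_bothGtSumGt h x),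
    preimage_swap_bothGtSumGt]

lemma measure_prod_bothGtSumGt_le {ν ν' μ : Measure ℝ} [SFinite ν'] [SFinite μ] {h : ℝ}
    {K : ℝ≥0∞} (hK : K ≠ ∞) (hdom : ∀ t, h ≤ t → ν' (Ioi t) ≤ K * μ (Ioi t)) (x : ℝ) :
    (ν.prod ν') (bothGtSumGt h x) ≤ K * (ν.prod μ) (bothGtSumGt h x) := by
  rw [Measure.prod_apply (measurableSet_bothGtSumGt h x),
    Measure.prod_apply (measurableSet_bothGtSumGt h x), ← lintegral_const_mul' _ _ hK]
  refine lintegral_mono fun t => ?_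
  rw [preimage_mk_bothGtSumGt]
  split_ifs
  · exact hdom _ (le_max_left _ _)
  · simp

lemma measure_prod_bothGtSumGt_le_mul {ν₁ ν₂ μ : Measure ℝ} [SFinite ν₁] [SFinite ν₂]
    [SFinite μ] {h : ℝ} {K₁ K₂ : ℝ≥0∞} (hK₁ : K₁ ≠ ∞) (hK₂ : K₂ ≠ ∞)
    (hdom₁ : ∀ t, h ≤ t → ν₁ (Ioi t) ≤ K₁ * μ (Ioi t))
    (hdom₂ : ∀ t, h ≤ t → ν₂ (Ioi t) ≤ K₂ * μ (Ioi t)) (x : ℝ) :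
    (ν₁.prod ν₂) (bothGtSumGt h x) ≤ K₁ * K₂ * (μ.prod μ) (bothGtSumGt h x) :=
  calc (ν₁.prod ν₂) (bothGtSumGt h x) ≤ K₂ * (ν₁.prod μ) (bothGtSumGt h x) :=
        measure_prod_bothGtSumGt_le hK₂ hdom₂ x
    _ = K₂ * (μ.prod ν₁) (bothGtSumGt h x) := by rw [measure_prod_bothGtSumGt_comm]
    _ ≤ K₂ * (K₁ * (μ.prod μ) (bothGtSumGt h x)) :=
        mul_le_mul_right (measure_prod_bothGtSumGt_le hK₁ hdom₁ x) _
    _ = K₁ * K₂ * (μ.prod μ) (bothGtSumGt h x) := by ring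

lemma measure_bothGtSumGt_add_rectangles_le (μ : Measure ℝ) [SFinite μ] {h x : ℝ}
    (hhx : h ≤ x) :
    (μ.prod μ) (bothGtSumGt h x) + μ (Ioc 0 h) * μ (Ioi x) + μ (Ioi x) * μ (Ioc 0 h) ≤
      (μ.prod μ) {p : ℝ × ℝ | x < p.1 + p.2} := by
  simp only [← Measure.prod_prod]
  refine add_add_le_measure_of_disjoint _ (measurableSet_Ioc.prod measurableSet_Ioi)
    (measurableSet_Ioi.prod measurableSet_Ioc) (disjoint_left.2 fun p h₁ h₂ => ?_)
    (disjoint_left.2 fun p h₁ h₂ => ?_) (disjoint_left.2 fun p h₁ h₂ => ?_) fun p hp => ?_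
  all_goals simp only [bothGtSumGt, mem_union, mem_prod, mem_Ioi, mem_Ioc, mem_ofPred_eq] at *
  all_goals grind

namespace Subexponential

variable {μ : Measure ℝ}

lemma isProbabilityMeasure (hμ : Subexponential μ) : IsProbabilityMeasure μ := hμ.1

lemma tailP_pos (hμ : Subexponential μ) (x : ℝ) : 0 < tailP μ x := hμ.2.2.1 x

lemma tailP_zero (hμ : Subexponential μ) : tailP μ 0 = 1 := by
  rw [tailP, hμ.2.1, ENNReal.toReal_one]

lemma tendsto_convTail_two_div (hμ : Subexponential μ) :
    Tendsto (fun x => convTail μ 2 x / tailP μ x) atTop (𝓝 2) := by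
  exact_mod_cast hμ.2.2.2 2 le_rfl

lemma mul_add_mul_le_convTail_two (hμ : Subexponential μ) {x y : ℝ} (hy : 0 ≤ y)
    (hyx : y ≤ x) :
    (2 - tailP μ y) * tailP μ x + (tailP μ y - tailP μ x) * tailP μ (x - y) ≤
      convTail μ 2 x := by
  have := hμ.isProbabilityMeasure
  have h := ENNReal.toReal_mono (by finiteness) (measure_rectangles_le_prod_sum_gt μ hyx)
  rw [ENNReal.toReal_add (by finiteness) (by finiteness),
    ENNReal.toReal_add (by finiteness) (by finiteness)] at h
  simp only [ENNReal.toReal_mul] at h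
  change tailP μ x * tailP μ 0 + _ * tailP μ x + _ * tailP μ (x - y) ≤ _ at h
  have h0 := measure_Ioc_toReal_add_tailP μ hy
  rw [hμ.tailP_zero] at h0 h
  rw [eq_sub_of_add_eq h0, eq_sub_of_add_eq (measure_Ioc_toReal_add_tailP μ hyx)] at h
  rw [convTail_two]
  linarith

lemma tendsto_tailP_sub_div (hμ : Subexponential μ) {y : ℝ} (hy : 0 ≤ y) :
    Tendsto (fun x => tailP μ (x - y) / tailP μ x) atTop (𝓝 1) := by
  have := hμ.isProbabilityMeasure
  have hpos := hμ.tailP_pos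
  have hupper : Tendsto (fun x => (convTail μ 2 x / tailP μ x - 2 + tailP μ y) /
      (tailP μ y - tailP μ x)) atTop (𝓝 1) := by
    have h := ((hμ.tendsto_convTail_two_div.sub_const 2).add_const (tailP μ y)).div
      ((tendsto_tailP_atTop μ).const_sub (tailP μ y)) (by simpa using (hpos y).ne')
    rwa [sub_self, zero_add, sub_zero, div_self (hpos y).ne'] at h
  refine tendsto_of_tendsto_of_tendsto_of_le_of_le' tendsto_const_nhds hupper
    (Eventually.of_forall fun x => ?_) ?_
  · rw [le_div_iff₀ (hpos x), one_mul]
    exact tailP_antitone μ (sub_le_self x hy)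
  · filter_upwards [(tendsto_tailP_atTop μ).eventually (gt_mem_nhds (hpos y)),
      eventually_ge_atTop y] with x hxy hyx
    rw [div_le_div_iff₀ (hpos x) (sub_pos.2 hxy), div_sub' (hpos x).ne',
      div_add' _ _ _ (hpos x).ne', div_mul_eq_mul_div, le_div_iff₀ (hpos x)]
    nlinarith [hμ.mul_add_mul_le_convTail_two hy hyx, hpos x]

lemma tendsto_comp_sub_div_tailP (hμ : Subexponential μ) {f : ℝ → ℝ} {c y : ℝ}
    (hf : Tendsto (fun x => f x / tailP μ x) atTop (𝓝 c)) (hy : 0 ≤ y) :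
    Tendsto (fun x => f (x - y) / tailP μ x) atTop (𝓝 c) := by
  have h := (hf.comp (tendsto_atTop_add_const_right atTop (-y) tendsto_id)).mul
    (hμ.tendsto_tailP_sub_div hy)
  rw [mul_one] at h
  exact h.congr fun x => div_mul_div_cancel₀ (hμ.tailP_pos _).ne'

lemma measure_bothGtSumGt_add_le_convTail_two (hμ : Subexponential μ) {h x : ℝ} (hh : 0 ≤ h)
    (hhx : h ≤ x) :
    ((μ.prod μ) (bothGtSumGt h x)).toReal + 2 * (1 - tailP μ h) * tailP μ x ≤
      convTail μ 2 x := by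
  have := hμ.isProbabilityMeasure
  have hB := ENNReal.toReal_mono (by finiteness) (measure_bothGtSumGt_add_rectangles_le μ hhx)
  rw [ENNReal.toReal_add (by finiteness) (by finiteness),
    ENNReal.toReal_add (by finiteness) (by finiteness)] at hB
  simp only [ENNReal.toReal_mul] at hB
  change _ + _ * tailP μ x + tailP μ x * _ ≤ _ at hB
  have h0 := measure_Ioc_toReal_add_tailP μ hh
  rw [hμ.tailP_zero] at h0
  rw [eq_sub_of_add_eq h0, ← convTail_two] at hB
  linarith

lemma eventually_eventually_measure_bothGtSumGt_div_lt (hμ : Subexponential μ) {η : ℝ}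
    (hη : 0 < η) :
    ∀ᶠ h in atTop, ∀ᶠ x in atTop,
      ((μ.prod μ) (bothGtSumGt h x)).toReal / tailP μ x < η := by
  have := hμ.isProbabilityMeasure
  filter_upwards [eventually_ge_atTop 0,
    (tendsto_tailP_atTop μ).eventually (gt_mem_nhds (by positivity : 0 < η / 4))] with h hh hFh
  filter_upwards [eventually_ge_atTop h, hμ.tendsto_convTail_two_div.eventually
    (gt_mem_nhds (by linarith : (2 : ℝ) < 2 + η / 2))] with x hhx hconv
  rw [div_lt_iff₀ (hμ.tailP_pos x)] at hconv ⊢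
  nlinarith [hμ.measure_bothGtSumGt_add_le_convTail_two hh hhx,
    mul_lt_mul_of_pos_right hFh (hμ.tailP_pos x)]

end Subexponential

section RandomVariables

variable {Ω : Type*} [MeasurableSpace Ω] {P : Measure Ω}

lemma measure_add_gt_le_add_measure_bothGtSumGt (Y₁ Y₂ : Ω → ℝ) (h x : ℝ) :
    P {ω | x < Y₁ ω + Y₂ ω} ≤ P {ω | x - h < Y₁ ω} + P {ω | x - h < Y₂ ω} +
      P {ω | (Y₁ ω, Y₂ ω) ∈ bothGtSumGt h x} := by
  refine (measure_mono fun ω hω => ?_).trans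
    ((measure_union_le _ _).trans (add_le_add_left (measure_union_le _ _) _))
  simp only [bothGtSumGt, mem_union, mem_ofPred_eq] at hω ⊢
  by_contra! hcon
  linarith [hcon.2 (by linarith) (by linarith)]

variable [IsFiniteMeasure P] {μ : Measure ℝ}

lemma eventually_measure_lt_le_ofReal_mul [IsFiniteMeasure μ] (hpos : ∀ x, 0 < tailP μ x)
    {Y : Ω → ℝ} {c K : ℝ}
    (hY : Tendsto (fun x => (P {ω | x < Y ω}).toReal / tailP μ x) atTop (𝓝 c)) (hcK : c < K) :
    ∀ᶠ t in atTop, P {ω | t < Y ω} ≤ ENNReal.ofReal K * μ (Ioi t) := by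
  filter_upwards [hY.eventually (gt_mem_nhds hcK)] with t ht
  rw [div_lt_iff₀ (hpos t)] at ht
  rw [← ENNReal.ofReal_toReal (measure_ne_top P _), ← ENNReal.ofReal_toReal (measure_ne_top μ _),
    ← ENNReal.ofReal_mul' ENNReal.toReal_nonneg]
  exact ENNReal.ofReal_le_ofReal ht.le

lemma ProbabilityTheory.IndepFun.measure_bothGtSumGt_le [SFinite μ]
    {Y₁ Y₂ : Ω → ℝ} (hm₁ : Measurable Y₁) (hm₂ : Measurable Y₂) (hind : IndepFun Y₁ Y₂ P)
    {h : ℝ} {K₁ K₂ : ℝ≥0∞} (hK₁ : K₁ ≠ ∞) (hK₂ : K₂ ≠ ∞)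
    (hdom₁ : ∀ t, h ≤ t → P {ω | t < Y₁ ω} ≤ K₁ * μ (Ioi t))
    (hdom₂ : ∀ t, h ≤ t → P {ω | t < Y₂ ω} ≤ K₂ * μ (Ioi t)) (x : ℝ) :
    P {ω | (Y₁ ω, Y₂ ω) ∈ bothGtSumGt h x} ≤ K₁ * K₂ * (μ.prod μ) (bothGtSumGt h x) := by
  have hmap := (indepFun_iff_map_prod_eq_prod_map_map hm₁.aemeasurable hm₂.aemeasurable).1 hind
  calc P {ω | (Y₁ ω, Y₂ ω) ∈ bothGtSumGt h x}
      = ((P.map Y₁).prod (P.map Y₂)) (bothGtSumGt h x) := by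
        rw [← hmap, Measure.map_apply (hm₁.prodMk hm₂) (measurableSet_bothGtSumGt h x)]
        rfl
    _ ≤ K₁ * K₂ * (μ.prod μ) (bothGtSumGt h x) :=
        measure_prod_bothGtSumGt_le_mul hK₁ hK₂
          (fun t ht => (Measure.map_apply hm₁ measurableSet_Ioi).trans_le (hdom₁ t ht))
          (fun t ht => (Measure.map_apply hm₂ measurableSet_Ioi).trans_le (hdom₂ t ht)) x

lemma ProbabilityTheory.IndepFun.measure_lt_add_sub_mul_le {Y₁ Y₂ : Ω → ℝ}
    (hm₂ : Measurable Y₂) (hn₁ : ∀ ω, 0 ≤ Y₁ ω) (hn₂ : ∀ ω, 0 ≤ Y₂ ω) (hind : IndepFun Y₁ Y₂ P)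
    (x : ℝ) :
    (P {ω | x < Y₁ ω}).toReal + (P {ω | x < Y₂ ω}).toReal -
        (P {ω | x < Y₁ ω}).toReal * (P {ω | x < Y₂ ω}).toReal ≤
      (P {ω | x < Y₁ ω + Y₂ ω}).toReal := by
  have hinter : P ({ω | x < Y₁ ω} ∩ {ω | x < Y₂ ω}) = P {ω | x < Y₁ ω} * P {ω | x < Y₂ ω} :=
    hind.measure_inter_preimage_eq_mul (Ioi x) (Ioi x) measurableSet_Ioi measurableSet_Ioi
  have hunion := measure_union_add_inter (μ := P) {ω | x < Y₁ ω}
    (measurableSet_lt measurable_const hm₂ : MeasurableSet {ω | x < Y₂ ω})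
  rw [hinter] at hunion
  have hsub : {ω | x < Y₁ ω} ∪ {ω | x < Y₂ ω} ⊆ {ω | x < Y₁ ω + Y₂ ω} := by
    rintro ω (hω | hω) <;> simp only [mem_ofPred_eq] at hω ⊢ <;> linarith [hn₁ ω, hn₂ ω]
  have h := congrArg ENNReal.toReal hunion
  rw [ENNReal.toReal_add (by finiteness) (by finiteness),
    ENNReal.toReal_add (by finiteness) (by finiteness), ENNReal.toReal_mul] at h
  linarith [ENNReal.toReal_mono (by finiteness) (measure_mono (μ := P) hsub)]

lemma ProbabilityTheory.IndepFun.measure_add_gt_le_of_tail_le [IsFiniteMeasure μ] {Y₁ Y₂ : Ω → ℝ}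
    (hm₁ : Measurable Y₁) (hm₂ : Measurable Y₂) (hind : IndepFun Y₁ Y₂ P) {h K₁ K₂ : ℝ}
    (hK₁ : 0 ≤ K₁) (hK₂ : 0 ≤ K₂)
    (hdom₁ : ∀ t, h ≤ t → P {ω | t < Y₁ ω} ≤ ENNReal.ofReal K₁ * μ (Ioi t))
    (hdom₂ : ∀ t, h ≤ t → P {ω | t < Y₂ ω} ≤ ENNReal.ofReal K₂ * μ (Ioi t)) (x : ℝ) :
    (P {ω | x < Y₁ ω + Y₂ ω}).toReal ≤
      (P {ω | x - h < Y₁ ω}).toReal + (P {ω | x - h < Y₂ ω}).toReal +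
        K₁ * K₂ * ((μ.prod μ) (bothGtSumGt h x)).toReal := by
  have hS := ENNReal.toReal_mono (by finiteness)
    ((measure_add_gt_le_add_measure_bothGtSumGt Y₁ Y₂ h x).trans
    (add_le_add_right (hind.measure_bothGtSumGt_le hm₁ hm₂ ENNReal.ofReal_ne_top
      ENNReal.ofReal_ne_top hdom₁ hdom₂ x) _))
  rwa [ENNReal.toReal_add (by finiteness) (by finiteness),
    ENNReal.toReal_add (by finiteness) (by finiteness), ENNReal.toReal_mul, ENNReal.toReal_mul,
    ENNReal.toReal_ofReal hK₁, ENNReal.toReal_ofReal hK₂] at hS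

lemma ProbabilityTheory.IndepFun.eventually_measure_add_gt_div_lt (hμ : Subexponential μ)
    {Y₁ Y₂ : Ω → ℝ} {c₁ c₂ b : ℝ} (hm₁ : Measurable Y₁) (hm₂ : Measurable Y₂)
    (hind : IndepFun Y₁ Y₂ P)
    (ht₁ : Tendsto (fun x => (P {ω | x < Y₁ ω}).toReal / tailP μ x) atTop (𝓝 c₁))
    (ht₂ : Tendsto (fun x => (P {ω | x < Y₂ ω}).toReal / tailP μ x) atTop (𝓝 c₂))
    (hb : c₁ + c₂ < b) :
    ∀ᶠ x in atTop, (P {ω | x < Y₁ ω + Y₂ ω}).toReal / tailP μ x < b := by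
  have := hμ.isProbabilityMeasure
  have hpos := hμ.tailP_pos
  have hc₁ : 0 ≤ c₁ := ge_of_tendsto' ht₁ fun x => div_nonneg ENNReal.toReal_nonneg (hpos x).le
  have hc₂ : 0 ≤ c₂ := ge_of_tendsto' ht₂ fun x => div_nonneg ENNReal.toReal_nonneg (hpos x).le
  set K := (c₁ + 1) * (c₂ + 1)
  have hK : 0 < K := by positivity
  set ε := b - (c₁ + c₂)
  have hε : 0 < ε := sub_pos.2 hb
  have hev₁ := eventually_forall_ge_atTop.2
    (eventually_measure_lt_le_ofReal_mul hpos ht₁ (lt_add_one c₁))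
  have hev₂ := eventually_forall_ge_atTop.2
    (eventually_measure_lt_le_ofReal_mul hpos ht₂ (lt_add_one c₂))
  have hevq := hμ.eventually_eventually_measure_bothGtSumGt_div_lt
    (div_pos hε (by positivity : (0 : ℝ) < 2 * K))
  obtain ⟨h, hh, hdom₁, hdom₂, hq⟩ :=
    ((eventually_ge_atTop 0).and (hev₁.and (hev₂.and hevq))).exists
  have hshift := hμ.tendsto_comp_sub_div_tailP
    (f := fun x => (P {ω | x < Y₁ ω}).toReal + (P {ω | x < Y₂ ω}).toReal)
    (by simpa only [add_div] using ht₁.add ht₂) hh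
  filter_upwards [hq, hshift.eventually (gt_mem_nhds (by linarith : c₁ + c₂ < c₁ + c₂ + ε / 2))]
    with x hqx hsx
  calc (P {ω | x < Y₁ ω + Y₂ ω}).toReal / tailP μ x
      ≤ ((P {ω | x - h < Y₁ ω}).toReal + (P {ω | x - h < Y₂ ω}).toReal +
          K * ((μ.prod μ) (bothGtSumGt h x)).toReal) / tailP μ x :=
        div_le_div_of_nonneg_right (hind.measure_add_gt_le_of_tail_le hm₁ hm₂ (by positivity)
          (by positivity) hdom₁ hdom₂ x) (hpos x).le
    _ = ((P {ω | x - h < Y₁ ω}).toReal + (P {ω | x - h < Y₂ ω}).toReal) / tailP μ x +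
          K * (((μ.prod μ) (bothGtSumGt h x)).toReal / tailP μ x) := by ring
    _ < c₁ + c₂ + ε / 2 + K * (ε / (2 * K)) := add_lt_add hsx (mul_lt_mul_of_pos_left hqx hK)
    _ = b := by field_simp; ring

lemma ProbabilityTheory.IndepFun.tendsto_measure_add_gt_div (hμ : Subexponential μ)
    {Y₁ Y₂ : Ω → ℝ} {c₁ c₂ : ℝ} (hm₁ : Measurable Y₁) (hm₂ : Measurable Y₂)
    (hn₁ : ∀ ω, 0 ≤ Y₁ ω) (hn₂ : ∀ ω, 0 ≤ Y₂ ω) (hind : IndepFun Y₁ Y₂ P)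
    (ht₁ : Tendsto (fun x => (P {ω | x < Y₁ ω}).toReal / tailP μ x) atTop (𝓝 c₁))
    (ht₂ : Tendsto (fun x => (P {ω | x < Y₂ ω}).toReal / tailP μ x) atTop (𝓝 c₂)) :
    Tendsto (fun x => (P {ω | x < Y₁ ω + Y₂ ω}).toReal / tailP μ x) atTop (𝓝 (c₁ + c₂)) := by
  have := hμ.isProbabilityMeasure
  have hpos := hμ.tailP_pos
  have hlower : Tendsto (fun x => (P {ω | x < Y₁ ω}).toReal / tailP μ x +
      (P {ω | x < Y₂ ω}).toReal / tailP μ x -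
      (P {ω | x < Y₁ ω}).toReal / tailP μ x * (P {ω | x < Y₂ ω}).toReal) atTop (𝓝 (c₁ + c₂)) := by
    simpa using (ht₁.add ht₂).sub (ht₁.mul (tendsto_zero_of_tendsto_div_tailP hpos ht₂))
  refine tendsto_order.2 ⟨fun a ha => ?_, fun b hb =>
    hind.eventually_measure_add_gt_div_lt hμ hm₁ hm₂ ht₁ ht₂ hb⟩
  filter_upwards [hlower.eventually (lt_mem_nhds ha)] with x hx
  refine hx.trans_le ?_
  rw [div_mul_eq_mul_div, ← add_div, ← sub_div]
  exact div_le_div_of_nonneg_right (hind.measure_lt_add_sub_mul_le hm₂ hn₁ hn₂ x) (hpos x).le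

lemma ProbabilityTheory.iIndepFun.tendsto_measure_sum_gt_div (hμ : Subexponential μ)
    {ι : Type*} {X : ι → Ω → ℝ} {c : ι → ℝ} (hmeas : ∀ i, Measurable (X i))
    (hnonneg : ∀ i ω, 0 ≤ X i ω) (hindep : iIndepFun X P)
    (htail : ∀ i, Tendsto (fun x => (P {ω | x < X i ω}).toReal / tailP μ x) atTop (𝓝 (c i)))
    (s : Finset ι) :
    Tendsto (fun x => (P {ω | x < ∑ i ∈ s, X i ω}).toReal / tailP μ x) atTop
      (𝓝 (∑ i ∈ s, c i)) := by
  classical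
  induction s using Finset.induction_on with
  | empty =>
    refine tendsto_const_nhds.congr' ?_
    filter_upwards [eventually_ge_atTop 0] with x hx
    simp [hx.not_gt]
  | insert i s hi ih =>
    have hind : IndepFun (X i) (fun ω => ∑ j ∈ s, X j ω) P := by
      simpa only [Finset.sum_fn] using (hindep.indepFun_finsetSum_of_notMem hmeas hi).symm
    simpa only [Finset.sum_insert hi] using hind.tendsto_measure_add_gt_div hμ (hmeas i)
      (Finset.measurable_sum s fun j _ => hmeas j) (hnonneg i)
      (fun ω => Finset.sum_nonneg fun j _ => hnonneg j ω) (htail i) ih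

end RandomVariables

lemma sum_sub_sq_le_measureReal_biUnion {α ι : Type*} [MeasurableSpace α] {P : Measure α}
    [IsFiniteMeasure P] {A : ι → Set α} (hA : ∀ i, MeasurableSet (A i))
    (hpair : ∀ i j, i ≠ j → P.real (A i ∩ A j) ≤ P.real (A i) * P.real (A j)) (s : Finset ι) :
    ∑ i ∈ s, P.real (A i) - (∑ i ∈ s, P.real (A i)) ^ 2 ≤ P.real (⋃ i ∈ s, A i) := by
  classical
  induction s using Finset.induction_on with
  | empty => simp
  | insert i s hi ih =>
    have hunion := measureReal_union_add_inter (μ := P) (s := A i)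
      (s.measurableSet_biUnion fun j _ => hA j) (measure_ne_top _ _) (measure_ne_top _ _)
    have hinter : P.real (A i ∩ ⋃ j ∈ s, A j) ≤ P.real (A i) * ∑ j ∈ s, P.real (A j) := by
      rw [inter_iUnion₂, Finset.mul_sum]
      exact (measureReal_biUnion_finset_le s _).trans
        (Finset.sum_le_sum fun j hj => hpair i j (ne_of_mem_of_not_mem hj hi).symm)
    have hs : 0 ≤ ∑ j ∈ s, P.real (A j) := Finset.sum_nonneg fun j _ => measureReal_nonneg
    rw [Finset.set_biUnion_insert, Finset.sum_insert hi]
    nlinarith [measureReal_nonneg (μ := P) (s := A i)]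

lemma ProbabilityTheory.iIndepFun.sum_sub_sq_le_measure_exists_lt {Ω ι : Type*}
    [MeasurableSpace Ω] {P : Measure Ω} [IsFiniteMeasure P] [Fintype ι] {X : ι → Ω → ℝ}
    (hmeas : ∀ i, Measurable (X i)) (hindep : iIndepFun X P) (x : ℝ) :
    ∑ i, (P {ω | x < X i ω}).toReal - (∑ i, (P {ω | x < X i ω}).toReal) ^ 2 ≤
      (P {ω | ∃ i, x < X i ω}).toReal := by
  have h := sum_sub_sq_le_measureReal_biUnion (P := P) (A := fun i => {ω | x < X i ω})
    (fun i => measurableSet_lt measurable_const (hmeas i))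
    (fun i j hij => ((congrArg ENNReal.toReal ((hindep.indepFun hij).measure_inter_preimage_eq_mul
      (Ioi x) (Ioi x) measurableSet_Ioi measurableSet_Ioi)).trans (ENNReal.toReal_mul ..)).le)
    Finset.univ
  simpa [measureReal_def, ofPred_exists] using h

lemma measure_sum_gt_forall_le_add_measure_exists_gt_le {Ω ι : Type*} [MeasurableSpace Ω]
    {P : Measure Ω} [IsFiniteMeasure P] [Fintype ι] {X : ι → Ω → ℝ}
    (hmeas : ∀ i, Measurable (X i)) (hnonneg : ∀ i ω, 0 ≤ X i ω) (x : ℝ) :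
    (P {ω | x < ∑ i, X i ω ∧ ∀ i, X i ω ≤ x}).toReal + (P {ω | ∃ i, x < X i ω}).toReal ≤
      (P {ω | x < ∑ i, X i ω}).toReal := by
  have hdisj : Disjoint {ω | x < ∑ i, X i ω ∧ ∀ i, X i ω ≤ x} {ω | ∃ i, x < X i ω} :=
    disjoint_left.2 fun ω h₁ ⟨i, hi⟩ => (h₁.2 i).not_gt hi
  have hsub : {ω | x < ∑ i, X i ω ∧ ∀ i, X i ω ≤ x} ∪ {ω | ∃ i, x < X i ω} ⊆
      {ω | x < ∑ i, X i ω} :=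
    union_subset (fun ω h => h.1) fun ω ⟨i, hi⟩ =>
      hi.trans_le (Finset.single_le_sum (fun j _ => hnonneg j ω) (Finset.mem_univ i))
  have hmeas_exists : MeasurableSet {ω | ∃ i, x < X i ω} := by
    simpa only [ofPred_exists] using
      MeasurableSet.iUnion fun i => measurableSet_lt measurable_const (hmeas i)
  exact (measureReal_union hdisj hmeas_exists).symm.trans_le (measureReal_mono hsub)

theorem truncated_sum_littleO_of_tail_equiv_general
    {Ω : Type} [MeasurableSpace Ω] (P : Measure Ω) [IsProbabilityMeasure P]
    (μ : Measure ℝ) (hμ : Subexponential μ)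
    (n : ℕ) (X : Fin n → Ω → ℝ) (c : Fin n → ℝ)
    (hmeas : ∀ i, Measurable (X i))
    (hnonneg : ∀ i ω, 0 ≤ X i ω)
    (hindep : iIndepFun X P)
    (htail : ∀ i, Tendsto (fun x => (P {ω | x < X i ω}).toReal / tailP μ x)
        atTop (nhds (c i))) :
    (fun x => (P {ω | x < ∑ i, X i ω ∧ ∀ i, X i ω ≤ x}).toReal)
      =o[atTop] fun x => tailP μ x := by
  have := hμ.isProbabilityMeasure
  have hpos := hμ.tailP_pos
  set a : ℝ → ℝ := fun x => ∑ i, (P {ω | x < X i ω}).toReal with ha_def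
  have ha : Tendsto (fun x => a x / tailP μ x) atTop (𝓝 (∑ i, c i)) := by
    simpa only [ha_def, Finset.sum_div] using tendsto_finsetSum Finset.univ fun i _ => htail i
  have hdiff : (fun x => (P {ω | x < ∑ i, X i ω}).toReal - a x) =o[atTop] tailP μ := by
    rw [isLittleO_iff_tendsto fun x hx => absurd hx (hpos x).ne']
    simpa only [sub_div, sub_self] using
      (hindep.tendsto_measure_sum_gt_div hμ hmeas hnonneg htail Finset.univ).sub ha
  have hsq : (fun x => a x ^ 2) =o[atTop] tailP μ := by
    rw [isLittleO_iff_tendsto fun x hx => absurd hx (hpos x).ne']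
    simpa only [sq, mul_div_right_comm, mul_zero] using
      ha.mul (tendsto_zero_of_tendsto_div_tailP hpos ha)
  refine (isBigO_of_le (l := atTop) fun x => ?_).trans_isLittleO (hdiff.add hsq)
  have h₁ := measure_sum_gt_forall_le_add_measure_exists_gt_le hmeas hnonneg (P := P) x
  have h₂ := hindep.sum_sub_sq_le_measure_exists_lt hmeas x
  simp only [ha_def]
  exact abs_le_abs_of_nonneg ENNReal.toReal_nonneg (by linarith)

/-- Lemma 1: independent nonnegative `Xᵢ` with `F̄ᵢ(x) ∼ cᵢ F̄(x)`,
`F` subexponential, `cᵢ ≥ 0`, `Σᵢ cᵢ > 0` imply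
`P[X₁+⋯+Xₙ > x, Xᵢ ≤ x for all i] = o(F̄(x))` as `x → ∞`. -/
theorem truncated_sum_littleO_of_tail_equiv
    {Ω : Type} [MeasurableSpace Ω] (P : Measure Ω) [IsProbabilityMeasure P]
    (μ : Measure ℝ) (hμ : Subexponential μ)
    (n : ℕ) (X : Fin n → Ω → ℝ) (c : Fin n → ℝ)
    (hmeas : ∀ i, Measurable (X i))
    (hnonneg : ∀ i ω, 0 ≤ X i ω)
    (hindep : iIndepFun X P)
    (hc : ∀ i, 0 ≤ c i) (hcpos : 0 < ∑ i, c i)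
    (htail : ∀ i, Tendsto (fun x => (P {ω | x < X i ω}).toReal / tailP μ x)
        atTop (nhds (c i))) :
    (fun x => (P {ω | x < ∑ i, X i ω ∧ ∀ i, X i ω ≤ x}).toReal)
      =o[atTop] fun x => tailP μ x :=
  truncated_sum_littleO_of_tail_equiv_general P μ hμ n X c hmeas hnonneg hindep htail
end

section
/- In the advance-reservation loss network, the engaged capacity at any time is bounded above, pathwise, by the engaged capacity in an infinite-capacity system without advance reservations in which the holding time of request n is Dₙ + θₙ and only requests with Bₙ ≤ C are admitted. Consequently the blocking probability is at most P[Σ_{i∈𝒩_{s,n}^{(C)}(θ+D)} Bᵢ + Bₙ > C]. -/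
/-!
Request sizes are a.s. positive, since their law lives on `(0, ∞)`. Along such a sample path,
an admitted request that is active at time `t` passed its own admission test at `t`, so its size
is at most `C`, and it arrived before `t`; hence it is also active at `t` in the comparison
system, which gives the pathwise bound. Such a request, active at some `t` in the reservation
window of request `n`, is still active at `τₙ ≤ t` in the comparison system; so if the comparison
load at `τₙ` leaves room for `Bₙ`, request `n` fits throughout its window and is admitted.
-/

open MeasureTheory ProbabilityTheory Filter Set Asymptotics
open scoped Classical

theorem Finset.sum_ite_zero_le_sum_ite_zero {ι M : Type*} [AddCommMonoid M] [PartialOrder M]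
    [IsOrderedAddMonoid M] (s : Finset ι) {p q : ι → Prop} [DecidablePred p] [DecidablePred q]
    {f : ι → M} (hpq : ∀ i ∈ s, p i → q i) (hf : ∀ i ∈ s, 0 ≤ f i) :
    (∑ i ∈ s, if p i then f i else 0) ≤ ∑ i ∈ s, if q i then f i else 0 := by
  rw [← Finset.sum_filter, ← Finset.sum_filter]
  exact Finset.sum_le_sum_of_subset_of_nonneg (Finset.monotone_filter_right s hpq)
    fun i hi _ => hf i (Finset.mem_of_mem_filter i hi)

theorem ae_pos_of_map_eq {Ω : Type*} [MeasurableSpace Ω] {P : Measure Ω} {μ : Measure ℝ}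
    [IsProbabilityMeasure μ] (hsupp : μ (Ioi 0) = 1) {X : Ω → ℝ} (hX : Measurable X)
    (hlaw : P.map X = μ) : ∀ᵐ ω ∂P, 0 < X ω := by
  have hμ : ∀ᵐ x ∂μ, 0 < x := mem_ae_iff.2 ((prob_compl_eq_zero_iff measurableSet_Ioi).2 hsupp)
  rw [← hlaw] at hμ
  exact ae_of_ae_map hX.aemeasurable hμ

def IsAdmissionRule (adm : ℕ → Prop) (τ b θ D : ℕ → ℝ) (C : ℝ) : Prop :=
  ∀ n, adm n ↔ ∀ t : ℝ, τ n + D n < t → t < τ n + D n + θ n →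
    (∑ i ∈ Finset.range n,
        if adm i ∧ τ i + D i < t ∧ t < τ i + D i + θ i then b i else 0) + b n ≤ C

namespace IsAdmissionRule

variable {adm : ℕ → Prop} {τ b θ D : ℕ → ℝ} {C : ℝ}

theorem le_capacity (h : IsAdmissionRule adm τ b θ D C) (hb : ∀ i, 0 ≤ b i) {n : ℕ} {t : ℝ}
    (hn : adm n) (ht₁ : τ n + D n < t) (ht₂ : t < τ n + D n + θ n) : b n ≤ C := by
  have hfit := (h n).1 hn t ht₁ ht₂
  have hheld : 0 ≤ ∑ i ∈ Finset.range n,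
      if adm i ∧ τ i + D i < t ∧ t < τ i + D i + θ i then b i else 0 :=
    Finset.sum_nonneg fun i _ => by split_ifs <;> simp [hb i]
  linarith

theorem engaged_le_comparison (h : IsAdmissionRule adm τ b θ D C) (hb : ∀ i, 0 ≤ b i)
    (hD : ∀ i, 0 ≤ D i) (n : ℕ) (t : ℝ) :
    (∑ i ∈ Finset.range n,
        if adm i ∧ τ i + D i < t ∧ t < τ i + D i + θ i then b i else 0)
      ≤ ∑ i ∈ Finset.range n,
          if b i ≤ C ∧ τ i ≤ t ∧ t < τ i + D i + θ i then b i else 0 := by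
  refine Finset.sum_ite_zero_le_sum_ite_zero _ (fun i _ ⟨hi, ht₁, ht₂⟩ => ?_) fun i _ => hb i
  exact ⟨h.le_capacity hb hi ht₁ ht₂, by linarith [hD i], ht₂⟩

theorem admitted_of_comparison_le (h : IsAdmissionRule adm τ b θ D C) (hb : ∀ i, 0 ≤ b i)
    {n : ℕ} (hDn : 0 ≤ D n)
    (hroom : (∑ i ∈ Finset.range n,
        if b i ≤ C ∧ τ n - τ i < θ i + D i then b i else 0) + b n ≤ C) : adm n := by
  refine (h n).2 fun t ht₁ _ => le_trans (add_le_add_left ?_ _) hroom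
  refine Finset.sum_ite_zero_le_sum_ite_zero _ (fun i _ ⟨hi, hi₁, hi₂⟩ => ?_) fun i _ => hb i
  exact ⟨h.le_capacity hb hi hi₁ hi₂, by linarith⟩

end IsAdmissionRule

theorem advance_reservation_comparison_bound_general
    {Ω : Type} [MeasurableSpace Ω] (P : Measure Ω)
    (μ : Measure ℝ) [IsProbabilityMeasure μ] (hsupp : μ (Set.Ioi 0) = 1)
    (τ B θ D : ℕ → Ω → ℝ)
    (hBmeas : ∀ n, Measurable (B n))
    (hBlaw : ∀ n, Measure.map (B n) P = μ)
    (hDnonneg : ∀ n ω, 0 ≤ D n ω)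
    -- advance-reservation loss dynamics:
    (A : ℝ → ℕ → Ω → Prop)
    (hA : ∀ C n ω, A C n ω ↔ ∀ t : ℝ,
        τ n ω + D n ω < t → t < τ n ω + D n ω + θ n ω →
          (∑ i ∈ Finset.range n,
              if A C i ω ∧ τ i ω + D i ω < t ∧ t < τ i ω + D i ω + θ i ω
              then B i ω else 0) + B n ω ≤ C) :
    -- (a) pathwise bound on the engaged capacity at any time `t`:
    (∀ (C : ℝ) (n : ℕ) (t : ℝ), ∀ᵐ ω ∂P,
      (∑ i ∈ Finset.range n,
          if A C i ω ∧ τ i ω + D i ω < t ∧ t < τ i ω + D i ω + θ i ω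
          then B i ω else 0)
        ≤ ∑ i ∈ Finset.range n,
            if B i ω ≤ C ∧ τ i ω ≤ t ∧ t < τ i ω + D i ω + θ i ω
            then B i ω else 0) ∧
    -- (b) bound on the blocking probability:
    (∀ (C : ℝ) (n : ℕ),
      P {ω | ¬ A C n ω}
        ≤ P {ω | C < (∑ i ∈ Finset.range n,
              if B i ω ≤ C ∧ τ n ω - τ i ω < θ i ω + D i ω then B i ω else 0)
            + B n ω}) := by
  have hBpos : ∀ᵐ ω ∂P, ∀ i, 0 < B i ω :=
    ae_all_iff.2 fun i => ae_pos_of_map_eq hsupp (hBmeas i) (hBlaw i)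
  have hrule : ∀ C ω, IsAdmissionRule (A C · ω) (τ · ω) (B · ω) (θ · ω) (D · ω) C :=
    fun C ω n => hA C n ω
  refine ⟨fun C n t => ?_, fun C n => measure_mono_ae ?_⟩
  · filter_upwards [hBpos] with ω hω
    exact (hrule C ω).engaged_le_comparison (fun i => (hω i).le) (hDnonneg · ω) n t
  · filter_upwards [hBpos] with ω hω hblocked
    by_contra hroom
    exact hblocked <|
      (hrule C ω).admitted_of_comparison_le (fun i => (hω i).le) (hDnonneg n ω) (not_lt.1 hroom)

/-- in the advance-reservation loss network, the engaged capacity at any time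
is bounded pathwise by the engaged capacity of an infinite-capacity system without advance
reservations in which request `n` holds for `Dₙ + θₙ` and only requests with `Bₙ ≤ C` are
admitted; consequently the blocking probability is at most
`P[Σ_{i∈𝒩_{s,n}^{(C)}(θ+D)} Bᵢ + Bₙ > C]`. -/
theorem advance_reservation_comparison_bound
    {Ω : Type} [MeasurableSpace Ω] (P : Measure Ω) [IsProbabilityMeasure P]
    (μ : Measure ℝ) [IsProbabilityMeasure μ] (hsupp : μ (Set.Ioi 0) = 1)
    (τ B θ D : ℕ → Ω → ℝ)
    (hτmeas : ∀ n, Measurable (τ n)) (hBmeas : ∀ n, Measurable (B n))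
    (hθmeas : ∀ n, Measurable (θ n)) (hDmeas : ∀ n, Measurable (D n))
    (hτpos : ∀ n ω, τ n ω < τ (n + 1) ω)
    (hBlaw : ∀ n, Measure.map (B n) P = μ)
    (hθnonneg : ∀ n ω, 0 ≤ θ n ω) (hDnonneg : ∀ n ω, 0 ≤ D n ω)
    -- advance-reservation loss dynamics:
    (A : ℝ → ℕ → Ω → Prop)
    (hAmeas : ∀ C n, MeasurableSet {ω | A C n ω})
    (hA : ∀ C n ω, A C n ω ↔ ∀ t : ℝ,
        τ n ω + D n ω < t → t < τ n ω + D n ω + θ n ω →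
          (∑ i ∈ Finset.range n,
              if A C i ω ∧ τ i ω + D i ω < t ∧ t < τ i ω + D i ω + θ i ω
              then B i ω else 0) + B n ω ≤ C) :
    -- (a) pathwise bound on the engaged capacity at any time `t`:
    (∀ (C : ℝ) (n : ℕ) (t : ℝ), ∀ᵐ ω ∂P,
      (∑ i ∈ Finset.range n,
          if A C i ω ∧ τ i ω + D i ω < t ∧ t < τ i ω + D i ω + θ i ω
          then B i ω else 0)
        ≤ ∑ i ∈ Finset.range n,
            if B i ω ≤ C ∧ τ i ω ≤ t ∧ t < τ i ω + D i ω + θ i ω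
            then B i ω else 0) ∧
    -- (b) bound on the blocking probability:
    (∀ (C : ℝ) (n : ℕ),
      P {ω | ¬ A C n ω}
        ≤ P {ω | C < (∑ i ∈ Finset.range n,
              if B i ω ≤ C ∧ τ n ω - τ i ω < θ i ω + D i ω then B i ω else 0)
            + B n ω}) :=
  advance_reservation_comparison_bound_general P μ hsupp τ B θ D hBmeas hBlaw hDnonneg A hA
end

section
/- Let X₁,…,Xₘ be independent nonnegative random variables where X₁,…,X_k have subexponential distribution F and X_{k+1},…,Xₘ are each stochastically dominated by Y₁+⋯+Y_H for i.i.d. Yⱼ ∼ F (H a fixed integer). Then for every ε > 0 there exists K_ε < ∞ (depending only on ε, F, H) such that P[X₁+⋯+Xₘ > x] ≤ K_ε (1+ε)^m (1-F(x)) for all x ≥ 0 and all m, k. -/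
open MeasureTheory ProbabilityTheory Filter Set Asymptotics
open scoped Classical

open scoped Topology

/-!
Write `Sₙ` for a sum of `n` independent copies of `F`. Splitting `P[Sₙ₊₁ > x]` according to
whether the first summand exceeds `x` gives
`P[Sₙ₊₁ > x] ≤ F̄(x) + ∫_{y ≤ x} P[Sₙ > x - y] dF(y)`, and subexponentiality
(`P[S₂ > x] ≤ (2 + δ) F̄(x)` for large `x`) bounds `∫_{y ≤ x} F̄(x - y) dF(y)` by `(1 + δ) F̄(x)`.
An induction on `n` then yields Kesten's bound `P[Sₙ > x] ≤ C (1 + δ)ⁿ F̄(x)`.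

Stochastic domination of tails is preserved under convolution (convolution is commutative and
monotone in each factor), so `X₁ + ⋯ + Xₘ` is dominated by `S_N` with `N ≤ (H + 1) m`, and it
remains to choose `δ` with `(1 + δ)^(H + 1) ≤ 1 + ε`.
-/

def TailLE (ν ρ : Measure ℝ) : Prop := ∀ t, ν (Ioi t) ≤ ρ (Ioi t)

theorem TailLE.refl (ν : Measure ℝ) : TailLE ν ν := fun _ => le_rfl

theorem conv_apply_Ioi (ρ σ : Measure ℝ) [SFinite σ] (x : ℝ) :
    (ρ ∗ σ) (Ioi x) = ∫⁻ a, σ (Ioi (x - a)) ∂ρ := by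
  rw [Measure.conv, Measure.map_apply (by fun_prop) measurableSet_Ioi,
    Measure.prod_apply (measurableSet_Ioi.preimage (by fun_prop))]
  congr! with a
  ext b
  simp [sub_lt_iff_lt_add']

theorem TailLE.conv_left {ν ρ : Measure ℝ} [SFinite ν] [SFinite ρ] (h : TailLE ν ρ)
    (σ : Measure ℝ) : TailLE (σ ∗ ν) (σ ∗ ρ) := fun x => by
  simpa only [conv_apply_Ioi] using lintegral_mono fun a => h (x - a)

theorem TailLE.conv {ν₁ ρ₁ ν₂ ρ₂ : Measure ℝ} [SFinite ν₁] [SFinite ρ₁] [SFinite ν₂]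
    [SFinite ρ₂] (h₁ : TailLE ν₁ ρ₁) (h₂ : TailLE ν₂ ρ₂) : TailLE (ν₁ ∗ ν₂) (ρ₁ ∗ ρ₂) :=
  fun x => calc
    (ν₁ ∗ ν₂) (Ioi x) ≤ (ν₁ ∗ ρ₂) (Ioi x) := h₂.conv_left ν₁ x
    _ = (ρ₂ ∗ ν₁) (Ioi x) := by rw [Measure.conv_comm]
    _ ≤ (ρ₂ ∗ ρ₁) (Ioi x) := h₁.conv_left ρ₂ x
    _ = (ρ₁ ∗ ρ₂) (Ioi x) := by rw [Measure.conv_comm]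

noncomputable def convPow (μ : Measure ℝ) : ℕ → Measure ℝ
  | 0 => Measure.dirac 0
  | n + 1 => μ ∗ convPow μ n

section ConvPow

variable (μ : Measure ℝ) [IsProbabilityMeasure μ]

instance isProbabilityMeasure_convPow (n : ℕ) : IsProbabilityMeasure (convPow μ n) := by
  induction n with
  | zero => exact Measure.dirac.isProbabilityMeasure
  | succ n ih => exact Measure.probabilitymeasure_of_probabilitymeasures_conv _ _

theorem convPow_one : convPow μ 1 = μ := Measure.conv_dirac_zero μ

theorem convPow_add (a b : ℕ) : convPow μ (a + b) = convPow μ a ∗ convPow μ b := by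
  induction a with
  | zero => simp [convPow, Measure.dirac_zero_conv]
  | succ a ih => rw [Nat.add_right_comm, convPow, convPow, ih, Measure.conv_assoc]

end ConvPow

section IndependentSums

variable {Ω ι : Type*} [MeasurableSpace Ω] {P : Measure Ω} [IsProbabilityMeasure P]
  {X : ι → Ω → ℝ}

theorem ProbabilityTheory.iIndepFun.map_sum_insert (hX : ∀ j, Measurable (X j))
    (hind : iIndepFun X P)
    {s : Finset ι} {i : ι} (hi : i ∉ s) :
    P.map (fun ω => ∑ j ∈ insert i s, X j ω) =
      P.map (X i) ∗ P.map (fun ω => ∑ j ∈ s, X j ω) := by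
  have hsum (t : Finset ι) : (fun ω => ∑ j ∈ t, X j ω) = ∑ j ∈ t, X j := by ext; simp
  rw [hsum, hsum, Finset.sum_insert hi]
  exact IndepFun.map_add_eq_map_conv_map (hX i) (by rw [← hsum]; fun_prop)
    (hind.indepFun_finsetSum_of_notMem hX hi).symm

theorem ProbabilityTheory.iIndepFun.map_sum_eq_convPow (hX : ∀ j, Measurable (X j))
    (hind : iIndepFun X P)
    {μ : Measure ℝ} (hlaw : ∀ j, P.map (X j) = μ) (s : Finset ι) :
    P.map (fun ω => ∑ j ∈ s, X j ω) = convPow μ s.card := by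
  classical
  induction s using Finset.induction_on with
  | empty => simp [convPow]
  | insert i s hi ih =>
    rw [hind.map_sum_insert hX hi, ih, hlaw, Finset.card_insert_of_notMem hi, convPow]

theorem ProbabilityTheory.iIndepFun.tailLE_map_sum (hX : ∀ j, Measurable (X j))
    (hind : iIndepFun X P)
    {μ : Measure ℝ} [IsProbabilityMeasure μ] {h : ι → ℕ}
    (hdom : ∀ j, TailLE (P.map (X j)) (convPow μ (h j))) (s : Finset ι) :
    TailLE (P.map (fun ω => ∑ j ∈ s, X j ω)) (convPow μ (∑ j ∈ s, h j)) := by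
  classical
  induction s using Finset.induction_on with
  | empty => simpa [convPow] using TailLE.refl _
  | insert i s hi ih =>
    have : IsProbabilityMeasure (P.map (X i)) :=
      Measure.isProbabilityMeasure_map (hX i).aemeasurable
    have : IsProbabilityMeasure (P.map (fun ω => ∑ j ∈ s, X j ω)) :=
      Measure.isProbabilityMeasure_map (by fun_prop)
    rw [hind.map_sum_insert hX hi, Finset.sum_insert hi, convPow_add]
    exact (hdom i).conv ih

end IndependentSums

theorem convTail_eq (μ : Measure ℝ) [IsProbabilityMeasure μ] (n : ℕ) (x : ℝ) :
    convTail μ n x = (convPow μ n (Ioi x)).toReal := by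
  have hlaw := iIndepFun.map_sum_eq_convPow (P := Measure.pi fun _ : Fin n => μ)
    (fun i => measurable_pi_apply i) (iIndepFun_pi (X := fun _ => id) fun _ => aemeasurable_id)
    (fun i => (measurePreserving_eval _ i).map_eq) Finset.univ
  rw [Finset.card_univ, Fintype.card_fin] at hlaw
  rw [convTail, ← hlaw, Measure.map_apply (by fun_prop) measurableSet_Ioi]
  rfl

theorem conv_apply_Ioi_le (ρ σ : Measure ℝ) [IsProbabilityMeasure σ] (x : ℝ) :
    (ρ ∗ σ) (Ioi x) ≤ ρ (Ioi x) + ∫⁻ a in Iic x, σ (Ioi (x - a)) ∂ρ := by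
  rw [conv_apply_Ioi, ← lintegral_add_compl _ measurableSet_Iic, compl_Iic, add_comm]
  gcongr
  calc ∫⁻ a in Ioi x, σ (Ioi (x - a)) ∂ρ ≤ ∫⁻ _ in Ioi x, 1 ∂ρ :=
        lintegral_mono fun _ => prob_le_one
    _ = ρ (Ioi x) := by simp

theorem conv_apply_Ioi_of_Ioi_zero (ρ σ : Measure ℝ) [IsProbabilityMeasure σ]
    (hσ : σ (Ioi 0) = 1) (x : ℝ) :
    (ρ ∗ σ) (Ioi x) = ρ (Ioi x) + ∫⁻ a in Iic x, σ (Ioi (x - a)) ∂ρ := by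
  have htail : ∀ a ∈ Ioi x, σ (Ioi (x - a)) = 1 := fun a ha =>
    le_antisymm prob_le_one (hσ ▸ measure_mono (Ioi_subset_Ioi (by linarith [mem_Ioi.1 ha])))
  rw [conv_apply_Ioi, ← lintegral_add_compl _ measurableSet_Iic, compl_Iic, add_comm,
    setLIntegral_congr_fun measurableSet_Ioi htail]
  simp

theorem Subexponential.eventually_setLIntegral_le {μ : Measure ℝ} (hμ : Subexponential μ)
    {δ : ℝ} (hδ : 0 < δ) :
    ∀ᶠ x in atTop, ∫⁻ a in Iic x, μ (Ioi (x - a)) ∂μ ≤ ENNReal.ofReal (1 + δ) * μ (Ioi x) := by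
  obtain ⟨hprob, hsupp, hpos, hlim⟩ := hμ
  filter_upwards [(hlim 2 le_rfl).eventually (gt_mem_nhds (by linarith : (2 : ℝ) < 2 + δ))]
    with x hx
  set I := ∫⁻ a in Iic x, μ (Ioi (x - a)) ∂μ
  have hsplit := conv_apply_Ioi_of_Ioi_zero μ μ hsupp x
  have hI : I ≠ ⊤ := ne_top_of_le_ne_top (measure_ne_top (μ ∗ μ) _) (le_add_self.trans hsplit.ge)
  have hconv : convTail μ 2 x = tailP μ x + I.toReal := by
    rw [convTail_eq, show 2 = 1 + 1 from rfl, convPow_add, convPow_one, hsplit,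
      ENNReal.toReal_add (measure_ne_top _ _) hI, tailP]
  rw [div_lt_iff₀ (hpos x), hconv] at hx
  calc I = ENNReal.ofReal I.toReal := (ENNReal.ofReal_toReal hI).symm
    _ ≤ ENNReal.ofReal ((1 + δ) * tailP μ x) := ENNReal.ofReal_le_ofReal (by linarith)
    _ = ENNReal.ofReal (1 + δ) * μ (Ioi x) := by
      rw [ENNReal.ofReal_mul (by linarith), tailP, ENNReal.ofReal_toReal (measure_ne_top _ _)]

theorem convPow_succ_apply_Ioi_le {μ : Measure ℝ} [IsProbabilityMeasure μ] {n : ℕ} {a b x : ℝ}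
    (ha : 0 ≤ a) (hb : 0 ≤ b)
    (hn : ∀ y, 0 ≤ y → convPow μ n (Ioi y) ≤ ENNReal.ofReal a * μ (Ioi y))
    (hx : ∫⁻ y in Iic x, μ (Ioi (x - y)) ∂μ ≤ ENNReal.ofReal b * μ (Ioi x)) :
    convPow μ (n + 1) (Ioi x) ≤ ENNReal.ofReal (1 + a * b) * μ (Ioi x) :=
  calc convPow μ (n + 1) (Ioi x)
      ≤ μ (Ioi x) + ∫⁻ y in Iic x, convPow μ n (Ioi (x - y)) ∂μ := conv_apply_Ioi_le _ _ x
    _ ≤ μ (Ioi x) + ∫⁻ y in Iic x, ENNReal.ofReal a * μ (Ioi (x - y)) ∂μ :=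
      add_le_add le_rfl <| setLIntegral_mono' measurableSet_Iic fun y hy => hn _ (sub_nonneg.2 hy)
    _ = μ (Ioi x) + ENNReal.ofReal a * ∫⁻ y in Iic x, μ (Ioi (x - y)) ∂μ := by
      rw [lintegral_const_mul' _ _ ENNReal.ofReal_ne_top]
    _ ≤ μ (Ioi x) + ENNReal.ofReal a * (ENNReal.ofReal b * μ (Ioi x)) := by gcongr
    _ = ENNReal.ofReal (1 + a * b) * μ (Ioi x) := by
      rw [ENNReal.ofReal_add zero_le_one (mul_nonneg ha hb), ENNReal.ofReal_one,
        ENNReal.ofReal_mul ha, add_mul, one_mul, mul_assoc]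

theorem Subexponential.exists_convPow_apply_Ioi_le {μ : Measure ℝ} (hμ : Subexponential μ)
    {δ : ℝ} (hδ : 0 < δ) :
    ∃ C : ℝ, 0 < C ∧ ∀ n x, 0 ≤ x → (convPow μ n (Ioi x)).toReal ≤ C * (1 + δ) ^ n * tailP μ x := by
  have := hμ.1
  obtain ⟨T, hT⟩ := eventually_atTop.1 (hμ.eventually_setLIntegral_le hδ)
  have hT0 : 0 < tailP μ T := hμ.2.2.1 T
  set c := (tailP μ T)⁻¹
  have hcT : ENNReal.ofReal c * μ (Ioi T) = 1 := by
    rw [← ENNReal.ofReal_toReal (measure_ne_top μ (Ioi T)), ← ENNReal.ofReal_mul (by positivity),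
      ← tailP, inv_mul_cancel₀ hT0.ne', ENNReal.ofReal_one]
  have hc : 1 ≤ c := one_le_inv_iff₀.2 ⟨hT0, measureReal_le_one⟩
  -- the solution of `a (n + 1) = (1 + δ) * a n + c` with `a 0 = 1`
  set a : ℕ → ℝ := fun n => (1 + c / δ) * (1 + δ) ^ n - c / δ
  have ha_succ (n : ℕ) : a (n + 1) = (1 + δ) * a n + c := by
    simp only [a]; field_simp; ring
  have ha_one (n : ℕ) : 1 ≤ a n := by
    have : 1 ≤ (1 + δ) ^ n := one_le_pow₀ (by linarith)
    have : 0 ≤ c / δ := by positivity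
    simp only [a]; nlinarith
  have key (n : ℕ) : ∀ x, 0 ≤ x → convPow μ n (Ioi x) ≤ ENNReal.ofReal (a n) * μ (Ioi x) := by
    induction n with
    | zero => intro x hx; simp [convPow, hx]
    | succ n ih =>
      intro x hx
      rcases le_or_gt x T with hxT | hxT
      · calc convPow μ (n + 1) (Ioi x) ≤ ENNReal.ofReal c * μ (Ioi T) := hcT ▸ prob_le_one
          _ ≤ ENNReal.ofReal (a (n + 1)) * μ (Ioi x) := by
            gcongr
            nlinarith [ha_succ n, ha_one n]
      · refine (convPow_succ_apply_Ioi_le (by linarith [ha_one n]) (by linarith) ih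
          (hT x hxT.le)).trans ?_
        gcongr
        nlinarith [ha_succ n]
  refine ⟨1 + c / δ, by positivity, fun n x hx => ?_⟩
  calc (convPow μ n (Ioi x)).toReal ≤ (ENNReal.ofReal (a n) * μ (Ioi x)).toReal :=
        ENNReal.toReal_mono (by finiteness) (key n x hx)
    _ = a n * tailP μ x := by
      rw [ENNReal.toReal_mul, ENNReal.toReal_ofReal (by linarith [ha_one n]), tailP]
    _ ≤ (1 + c / δ) * (1 + δ) ^ n * tailP μ x := by
      gcongr
      · exact measureReal_nonneg
      · exact sub_le_self _ (by positivity)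

theorem exists_pos_one_add_pow_le (L : ℕ) {ε : ℝ} (hε : 0 < ε) :
    ∃ δ > 0, (1 + δ) ^ L ≤ 1 + ε := by
  have hlim : Tendsto (fun δ : ℝ => (1 + δ) ^ L) (𝓝[>] 0) (𝓝 1) := by
    have : Continuous fun δ : ℝ => (1 + δ) ^ L := by fun_prop
    simpa using (this.tendsto 0).mono_left nhdsWithin_le_nhds
  obtain ⟨δ, hδε, hδ⟩ :=
    ((hlim.eventually (ge_mem_nhds (by linarith : (1 : ℝ) < 1 + ε))).and self_mem_nhdsWithin).exists
  exact ⟨δ, hδ, hδε⟩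

theorem kesten_bound_with_dominated_terms_general
    (μ : Measure ℝ) (hμ : Subexponential μ) (H : ℕ) :
    ∀ ε : ℝ, 0 < ε → ∃ K : ℝ, 0 < K ∧
      ∀ (Ω : Type) (_ : MeasurableSpace Ω) (P : Measure Ω),
        IsProbabilityMeasure P →
      ∀ (m k : ℕ) (X : Fin m → Ω → ℝ), k ≤ m →
        (∀ j, Measurable (X j)) →
        (∀ j ω, 0 ≤ X j ω) →
        iIndepFun X P →
        (∀ j : Fin m, (j : ℕ) < k → Measure.map (X j) P = μ) →
        (∀ j : Fin m, k ≤ (j : ℕ) →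
          ∀ x : ℝ, (P {ω | x < X j ω}).toReal ≤ convTail μ H x) →
        ∀ x : ℝ, 0 ≤ x →
          (P {ω | x < ∑ j, X j ω}).toReal ≤ K * (1 + ε) ^ m * tailP μ x := by
  intro ε hε
  have := hμ.1
  obtain ⟨δ, hδ, hδε⟩ := exists_pos_one_add_pow_le (H + 1) hε
  obtain ⟨C, hC, hkesten⟩ := hμ.exists_convPow_apply_Ioi_le hδ
  refine ⟨C, hC, fun Ω _ P _ m k X _ hX _ hind hlaw hdom x hx => ?_⟩
  set copies : Fin m → ℕ := fun j => if (j : ℕ) < k then 1 else H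
  have hdomX (j : Fin m) : TailLE (P.map (X j)) (convPow μ (copies j)) := by
    intro t
    by_cases hj : (j : ℕ) < k
    · simp only [copies, hj, if_true, convPow_one, hlaw j hj, le_rfl]
    · simp only [copies, hj, if_false]
      rw [Measure.map_apply (hX j) measurableSet_Ioi]
      exact (ENNReal.toReal_le_toReal (by finiteness) (by finiteness)).1
        ((hdom j (not_lt.1 hj) t).trans_eq (convTail_eq μ H t))
  have hN : ∑ j, copies j ≤ (H + 1) * m := by
    simpa [mul_comm] using Finset.sum_le_card_nsmul Finset.univ copies (H + 1) fun j _ => by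
      simp only [copies]; split <;> omega
  calc (P {ω | x < ∑ j, X j ω}).toReal = (P.map (fun ω => ∑ j, X j ω) (Ioi x)).toReal := by
        rw [Measure.map_apply (by fun_prop) measurableSet_Ioi]; rfl
    _ ≤ (convPow μ (∑ j, copies j) (Ioi x)).toReal :=
        ENNReal.toReal_mono (by finiteness) (hind.tailLE_map_sum hX hdomX Finset.univ x)
    _ ≤ C * (1 + δ) ^ (∑ j, copies j) * tailP μ x := hkesten _ x hx
    _ ≤ C * (1 + ε) ^ m * tailP μ x := by
      gcongr
      · exact measureReal_nonneg
      · calc (1 + δ) ^ (∑ j, copies j) ≤ (1 + δ) ^ ((H + 1) * m) :=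
            pow_le_pow_right₀ (by linarith) hN
          _ = ((1 + δ) ^ (H + 1)) ^ m := pow_mul _ _ _
          _ ≤ (1 + ε) ^ m := by gcongr

/-- a uniform Kesten-type bound for sums of independent nonnegative variables,
`k` of which have the subexponential distribution `F` and the remaining ones are each
stochastically dominated by a sum of `H` i.i.d. copies of `F`: for every `ε > 0` there is
`K_ε < ∞` (depending only on `ε`, `F`, `H`) with
`P[X₁+⋯+Xₘ > x] ≤ K_ε (1+ε)^m (1-F(x))` for all `x ≥ 0` and all `m, k`. -/
theorem kesten_bound_with_dominated_terms
    (μ : Measure ℝ) (hμ : Subexponential μ) (H : ℕ) (hH : 1 ≤ H) :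
    ∀ ε : ℝ, 0 < ε → ∃ K : ℝ, 0 < K ∧
      ∀ (Ω : Type) (_ : MeasurableSpace Ω) (P : Measure Ω),
        IsProbabilityMeasure P →
      ∀ (m k : ℕ) (X : Fin m → Ω → ℝ), k ≤ m →
        (∀ j, Measurable (X j)) →
        (∀ j ω, 0 ≤ X j ω) →
        iIndepFun X P →
        (∀ j : Fin m, (j : ℕ) < k → Measure.map (X j) P = μ) →
        (∀ j : Fin m, k ≤ (j : ℕ) →
          ∀ x : ℝ, (P {ω | x < X j ω}).toReal ≤ convTail μ H x) →
        ∀ x : ℝ, 0 ≤ x →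
          (P {ω | x < ∑ j, X j ω}).toReal ≤ K * (1 + ε) ^ m * tailP μ x :=
  kesten_bound_with_dominated_terms_general μ hμ H
end

section
/- In the infinite-capacity G/G/∞ system with renewal arrivals of rate λ and i.i.d. service times with finite mean E[θ], the number N_n^{(∞)} of customers present at the n-th arrival epoch satisfies: the probability generating function E[z^{N_n^{(∞)}}] is finite for every complex z; in particular P[N_n^{(∞)} > ψ/2] → 0 as ψ → ∞, uniformly in n. -/
open MeasureTheory ProbabilityTheory Filter Set Asymptotics
open scoped Classical

/-! Customer `i < n` is still in service at `τₙ` only if `θᵢ > ε (n - i)` or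
`τₙ - τᵢ < ε (n - i)`. Summed over `i`, the first probabilities are at most `E[θ] / ε`; by a
Chernoff bound on the sum of the `n - i` i.i.d. positive interarrival times the second ones are at
most `r ^ (n - i)`, where `r = e^ε E[e^{-(τ₁ - τ₀)}] < 1` once `ε > 0` is small. So `E[Nₙ]` is
bounded uniformly in `n`, and Markov's inequality gives the uniform tail bound. The generating
function is finite simply because `Nₙ ≤ n`. -/

open scoped Finset Topology

lemma Finset.sum_range_tsub_eq_sum_range_succ {M : Type*} [AddCommMonoid M] (f : ℕ → M) (n : ℕ) :
    ∑ i ∈ Finset.range n, f (n - i) = ∑ k ∈ Finset.range n, f (k + 1) := by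
  rw [← Finset.sum_range_reflect]
  refine Finset.sum_congr rfl fun i hi => ?_
  rw [Finset.mem_range] at hi
  congr 1
  omega

lemma card_filter_mul_succ_lt_le_div {ε y : ℝ} (hε : 0 < ε) (hy : 0 ≤ y) (n : ℕ) :
    (#{k ∈ Finset.range n | ε * (k + 1 : ℕ) < y} : ℝ) ≤ y / ε := by
  have hsub : {k ∈ Finset.range n | ε * (k + 1 : ℕ) < y} ⊆ Finset.range ⌊y / ε⌋₊ := by
    intro k hk
    rw [Finset.mem_filter] at hk
    rw [Finset.mem_range, ← Nat.succ_le_iff]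
    exact Nat.le_floor ((le_div_iff₀' hε).2 hk.2.le)
  calc (#{k ∈ Finset.range n | ε * (k + 1 : ℕ) < y} : ℝ) ≤ ⌊y / ε⌋₊ := by
        exact_mod_cast (Finset.card_le_card hsub).trans (Finset.card_range _).le
    _ ≤ y / ε := Nat.floor_le (div_nonneg hy hε.le)

lemma exists_pos_exp_mul_lt_one {ρ : ℝ} (hρ : ρ < 1) : ∃ ε > 0, Real.exp ε * ρ < 1 := by
  have hlim : Tendsto (fun t => Real.exp t * ρ) (𝓝[>] 0) (𝓝 ρ) := by
    simpa using ((Real.continuous_exp.tendsto 0).mul_const ρ).mono_left nhdsWithin_le_nhds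
  obtain ⟨ε, hερ, hε⟩ := ((hlim.eventually (gt_mem_nhds hρ)).and self_mem_nhdsWithin).exists
  exact ⟨ε, hε, hερ⟩

section Probability

variable {Ω : Type*} [MeasurableSpace Ω] {μ : Measure Ω}

lemma measurable_card_filter {ι : Type*} (s : Finset ι) {p : ι → Ω → Prop}
    [∀ i ω, Decidable (p i ω)] (hp : ∀ i, MeasurableSet {ω | p i ω}) :
    Measurable fun ω => #{i ∈ s | p i ω} := by
  simp_rw [Finset.card_filter]
  exact Finset.measurable_sum _ fun i _ => Measurable.ite (hp i) measurable_const measurable_const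

lemma integral_card_filter [IsFiniteMeasure μ] {ι : Type*} (s : Finset ι) {p : ι → Ω → Prop}
    [∀ i ω, Decidable (p i ω)] (hp : ∀ i, MeasurableSet {ω | p i ω}) :
    ∫ ω, (#{i ∈ s | p i ω} : ℝ) ∂μ = ∑ i ∈ s, μ.real {ω | p i ω} := by
  have hind : ∀ ω, (#{i ∈ s | p i ω} : ℝ) = ∑ i ∈ s, {ω | p i ω}.indicator 1 ω := by
    intro ω
    rw [← Finset.sum_boole]
    exact Finset.sum_congr rfl fun i _ => by simp [Set.indicator_apply]
  simp_rw [hind]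
  rw [integral_finsetSum _ fun i _ => (integrable_const 1).indicator (hp i)]
  exact Finset.sum_congr rfl fun i _ => integral_indicator_one (hp i)

lemma sum_measureReal_mul_succ_lt_le [IsFiniteMeasure μ] {Y : Ω → ℝ} (hYm : Measurable Y)
    (hY0 : ∀ ω, 0 ≤ Y ω) (hYi : Integrable Y μ) {ε : ℝ} (hε : 0 < ε) (n : ℕ) :
    ∑ k ∈ Finset.range n, μ.real {ω | ε * (k + 1 : ℕ) < Y ω} ≤ (∫ ω, Y ω ∂μ) / ε := by
  rw [← integral_card_filter _ fun k => measurableSet_lt measurable_const hYm, ← integral_div]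
  refine integral_mono_of_nonneg (ae_of_all _ fun ω => Nat.cast_nonneg _) (hYi.div_const ε)
    (ae_of_all _ fun ω => card_filter_mul_succ_lt_le_div hε (hY0 ω) n)

lemma integrable_comp_of_le [IsFiniteMeasure μ] {E : Type*} [NormedAddCommGroup E] (g : ℕ → E)
    {N : Ω → ℕ} (hN : Measurable N) {n : ℕ} (hNn : ∀ ω, N ω ≤ n) :
    Integrable (fun ω => g (N ω)) μ :=
  Integrable.of_bound (StronglyMeasurable.of_discrete.comp_measurable hN).aestronglyMeasurable
    (∑ k ∈ Finset.range (n + 1), ‖g k‖) (ae_of_all _ fun ω =>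
      Finset.single_le_sum (f := fun k => ‖g k‖) (fun _ _ => norm_nonneg _)
        (Finset.mem_range.2 (Nat.lt_succ_of_le (hNn ω))))

lemma measureReal_setOf_lt_le_add [IsFiniteMeasure μ] (f g : Ω → ℝ) (c : ℝ) :
    μ.real {ω | f ω < g ω} ≤ μ.real {ω | c < g ω} + μ.real {ω | f ω < c} := by
  refine (measureReal_mono fun ω (h : f ω < g ω) => ?_).trans (measureReal_union_le _ _)
  rcases lt_or_ge c (g ω) with hc | hc
  exacts [Or.inl hc, Or.inr (h.trans_le hc)]

lemma tendsto_iSup_measureReal_lt [IsFiniteMeasure μ] {ι : Type*} {f : ι → Ω → ℝ} {C : ℝ}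
    (hf0 : ∀ i, 0 ≤ᵐ[μ] f i) (hfi : ∀ i, Integrable (f i) μ) (hC : ∀ i, ∫ ω, f i ω ∂μ ≤ C) :
    Tendsto (fun c => ⨆ i, μ.real {ω | c < f i ω}) atTop (𝓝 0) := by
  have markov : ∀ c > 0, ∀ i, μ.real {ω | c < f i ω} ≤ max C 0 / c := fun c hc i => by
    rw [le_div_iff₀' hc]
    calc c * μ.real {ω | c < f i ω} ≤ c * μ.real {ω | c ≤ f i ω} :=
          mul_le_mul_of_nonneg_left (measureReal_mono fun ω (h : c < f i ω) => h.le) hc.le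
      _ ≤ ∫ ω, f i ω ∂μ := mul_meas_ge_le_integral_of_nonneg (hf0 i) (hfi i) c
      _ ≤ max C 0 := (hC i).trans (le_max_left _ _)
  refine tendsto_of_tendsto_of_tendsto_of_le_of_le' tendsto_const_nhds
    ((tendsto_const_nhds (x := max C 0)).div_atTop tendsto_id) (Eventually.of_forall fun c =>
      Real.iSup_nonneg fun i => measureReal_nonneg) ?_
  filter_upwards [eventually_gt_atTop 0] with c hc
  exact Real.iSup_le (markov c hc) (div_nonneg (le_max_right _ _) hc.le)

lemma mgf_lt_one_of_pos [IsProbabilityMeasure μ] {X : Ω → ℝ} (hX : Measurable X)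
    (hpos : ∀ ω, 0 < X ω) {t : ℝ} (ht : t < 0) : mgf X μ t < 1 := by
  have hlt : ∀ ω, Real.exp (t * X ω) < 1 := fun ω =>
    Real.exp_lt_one_iff.2 (mul_neg_of_neg_of_pos ht (hpos ω))
  have hint : Integrable (fun ω => Real.exp (t * X ω)) μ :=
    Integrable.of_bound (by fun_prop) 1 (ae_of_all _ fun ω => by
      rw [Real.norm_of_nonneg (Real.exp_pos _).le]; exact (hlt ω).le)
  have hgap : 0 < ∫ ω, (1 - Real.exp (t * X ω)) ∂μ := by
    rw [integral_pos_iff_support_of_nonneg (fun ω => sub_nonneg.2 (hlt ω).le)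
      ((integrable_const 1).sub hint)]
    have : Function.support (fun ω => 1 - Real.exp (t * X ω)) = univ :=
      eq_univ_of_forall fun ω => sub_ne_zero.2 (hlt ω).ne'
    simp [this]
  rw [integral_sub (integrable_const 1) hint] at hgap
  simpa [mgf] using hgap

lemma measureReal_sum_lt_mul_card_le [IsProbabilityMeasure μ] {ι : Type*} {X : ι → Ω → ℝ}
    {Y : Ω → ℝ} (hX : ∀ i, Measurable (X i)) (hindep : iIndepFun X μ)
    (hident : ∀ i, IdentDistrib (X i) Y μ μ) (hX0 : ∀ i ω, 0 ≤ X i ω) (ε : ℝ) (s : Finset ι) :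
    μ.real {ω | ∑ i ∈ s, X i ω < ε * #s} ≤ (Real.exp ε * mgf Y μ (-1)) ^ #s := by
  have hint : Integrable (fun ω => Real.exp (-1 * (∑ i ∈ s, X i) ω)) μ :=
    Integrable.of_bound (by fun_prop) 1 (ae_of_all _ fun ω => by
      rw [Real.norm_of_nonneg (Real.exp_pos _).le, Real.exp_le_one_iff, Finset.sum_apply]
      linarith [Finset.sum_nonneg fun i (_ : i ∈ s) => hX0 i ω])
  calc μ.real {ω | ∑ i ∈ s, X i ω < ε * #s}
      ≤ μ.real {ω | (∑ i ∈ s, X i) ω ≤ ε * #s} := measureReal_mono fun ω h => by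
        simpa only [mem_ofPred_eq, Finset.sum_apply] using le_of_lt h
    _ ≤ Real.exp (-(-1) * (ε * #s)) * mgf (∑ i ∈ s, X i) μ (-1) :=
        measure_le_le_exp_mul_mgf _ (by norm_num) hint
    _ = (Real.exp ε * mgf Y μ (-1)) ^ #s := by
        rw [hindep.mgf_sum hX, Finset.prod_eq_pow_card fun i _ =>
          congrFun (mgf_congr_identDistrib (hident i)) (-1),
          mul_pow, ← Real.exp_nat_mul, neg_neg, one_mul, mul_comm ε]

lemma measureReal_sub_lt_mul_le_pow [IsProbabilityMeasure μ] {τ : ℕ → Ω → ℝ}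
    (hτ : ∀ n, Measurable (τ n)) (hmono : ∀ n ω, τ n ω ≤ τ (n + 1) ω)
    (hindep : iIndepFun (fun n ω => τ (n + 1) ω - τ n ω) μ)
    (hident : ∀ n, IdentDistrib (fun ω => τ (n + 1) ω - τ n ω) (fun ω => τ 1 ω - τ 0 ω) μ μ)
    (ε : ℝ) {i n : ℕ} (hin : i ≤ n) :
    μ.real {ω | τ n ω - τ i ω < ε * (n - i : ℕ)}
      ≤ (Real.exp ε * mgf (fun ω => τ 1 ω - τ 0 ω) μ (-1)) ^ (n - i) := by
  have h := measureReal_sum_lt_mul_card_le (X := fun j ω => τ (j + 1) ω - τ j ω)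
    (fun j => (hτ (j + 1)).sub (hτ j)) hindep hident (fun j ω => sub_nonneg.2 (hmono j ω)) ε
    (Finset.Ico i n)
  have htelescope : ∀ ω, ∑ j ∈ Finset.Ico i n, (τ (j + 1) ω - τ j ω) = τ n ω - τ i ω :=
    fun ω => Finset.sum_Ico_sub (f := fun k => τ k ω) hin
  simpa only [htelescope, Nat.card_Ico] using h

lemma integral_card_filter_sub_lt_le [IsFiniteMeasure μ] {τ θ : ℕ → Ω → ℝ}
    (hτ : ∀ n, Measurable (τ n)) (hθ : ∀ n, Measurable (θ n)) (hθ0 : ∀ ω, 0 ≤ θ 0 ω)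
    (hθident : ∀ n, IdentDistrib (θ n) (θ 0) μ μ) (hθint : Integrable (θ 0) μ)
    {ε r : ℝ} (hε : 0 < ε) (hr0 : 0 ≤ r) (hr1 : r < 1)
    (hτtail : ∀ i n, i < n → μ.real {ω | τ n ω - τ i ω < ε * (n - i : ℕ)} ≤ r ^ (n - i))
    (n : ℕ) :
    ∫ ω, (#{i ∈ Finset.range n | τ n ω - τ i ω < θ i ω} : ℝ) ∂μ
      ≤ (∫ ω, θ 0 ω ∂μ) / ε + (1 - r)⁻¹ := by
  have hθtail : ∀ i (c : ℝ), μ.real {ω | c < θ i ω} = μ.real {ω | c < θ 0 ω} := fun i c =>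
    congrArg ENNReal.toReal ((hθident i).measure_mem_eq measurableSet_Ioi)
  have hgeom : ∑ k ∈ Finset.range n, r ^ (k + 1) ≤ (1 - r)⁻¹ :=
    (Finset.sum_le_sum fun k _ => pow_le_pow_of_le_one hr0 hr1.le k.le_succ).trans
      (sum_le_hasSum _ (fun k _ => pow_nonneg hr0 k) (hasSum_geometric_of_lt_one hr0 hr1))
  rw [integral_card_filter (p := fun i ω => τ n ω - τ i ω < θ i ω) _
    fun i => measurableSet_lt ((hτ n).sub (hτ i)) (hθ i)]
  calc ∑ i ∈ Finset.range n, μ.real {ω | τ n ω - τ i ω < θ i ω}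
      ≤ ∑ i ∈ Finset.range n, (μ.real {ω | ε * (n - i : ℕ) < θ 0 ω} + r ^ (n - i)) := by
        refine Finset.sum_le_sum fun i hi => ?_
        rw [← hθtail i]
        exact (measureReal_setOf_lt_le_add _ _ _).trans
          (add_le_add_right (hτtail i n (Finset.mem_range.1 hi)) _)
    _ = ∑ k ∈ Finset.range n, μ.real {ω | ε * (k + 1 : ℕ) < θ 0 ω}
          + ∑ k ∈ Finset.range n, r ^ (k + 1) := by
        rw [Finset.sum_range_tsub_eq_sum_range_succ
          (fun m => μ.real {ω | ε * (m : ℕ) < θ 0 ω} + r ^ m), Finset.sum_add_distrib]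
    _ ≤ (∫ ω, θ 0 ω ∂μ) / ε + (1 - r)⁻¹ :=
        add_le_add (sum_measureReal_mul_succ_lt_le (hθ 0) hθ0 hθint hε n) hgeom

end Probability

theorem gg_infinity_pgf_finite_general
    {Ω : Type} [MeasurableSpace Ω] (P : Measure Ω) [IsProbabilityMeasure P]
    (τ θ : ℕ → Ω → ℝ)
    (hτmeas : ∀ n, Measurable (τ n)) (hθmeas : ∀ n, Measurable (θ n))
    (hτpos : ∀ n ω, τ n ω < τ (n + 1) ω)
    (hτident : ∀ n, Measure.map (fun ω => τ (n + 1) ω - τ n ω) P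
        = Measure.map (fun ω => τ 1 ω - τ 0 ω) P)
    (hθnonneg : ∀ n ω, 0 ≤ θ n ω)
    (hθident : ∀ n, Measure.map (θ n) P = Measure.map (θ 0) P)
    (hθint : Integrable (θ 0) P)
    (hindep : iIndepFun
      (fun k => Sum.elim (fun n => fun ω => τ (n + 1) ω - τ n ω) θ k) P)
    -- the number of customers in service at the `n`-th arrival epoch:
    (N : ℕ → Ω → ℕ)
    (hN : ∀ n ω, N n ω
        = ((Finset.range n).filter fun i => τ n ω - τ i ω < θ i ω).card) :
    (∀ z : ℂ, ∀ n, Integrable (fun ω => z ^ N n ω) P) ∧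
    Tendsto (fun ψ : ℝ => ⨆ n : ℕ, (P {ω | ψ / 2 < (N n ω : ℝ)}).toReal)
      atTop (nhds 0) := by
  obtain rfl : N = fun n ω => #{i ∈ Finset.range n | τ n ω - τ i ω < θ i ω} :=
    funext fun n => funext (hN n)
  have hNmeas : ∀ n, Measurable fun ω => #{i ∈ Finset.range n | τ n ω - τ i ω < θ i ω} :=
    fun n => measurable_card_filter _ fun i =>
      measurableSet_lt ((hτmeas n).sub (hτmeas i)) (hθmeas i)
  have hNle : ∀ n ω, #{i ∈ Finset.range n | τ n ω - τ i ω < θ i ω} ≤ n := fun n ω =>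
    (Finset.card_filter_le _ _).trans (Finset.card_range n).le
  refine ⟨fun z n => integrable_comp_of_le (z ^ ·) (hNmeas n) (hNle n), ?_⟩
  have hρ : mgf (fun ω => τ 1 ω - τ 0 ω) P (-1) < 1 :=
    mgf_lt_one_of_pos ((hτmeas 1).sub (hτmeas 0)) (fun ω => sub_pos.2 (hτpos 0 ω)) (by norm_num)
  obtain ⟨ε, hε, hr⟩ := exists_pos_exp_mul_lt_one hρ
  have hτtail := fun i n (hin : i < n) => measureReal_sub_lt_mul_le_pow hτmeas
    (fun n ω => (hτpos n ω).le) (hindep.precomp Sum.inl_injective)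
    (fun n => ⟨(hτmeas (n + 1)).sub (hτmeas n) |>.aemeasurable,
      (hτmeas 1).sub (hτmeas 0) |>.aemeasurable, hτident n⟩) ε hin.le
  have hmean := integral_card_filter_sub_lt_le hτmeas hθmeas (hθnonneg 0)
    (fun n => ⟨(hθmeas n).aemeasurable, (hθmeas 0).aemeasurable, hθident n⟩) hθint hε
    (mul_nonneg (Real.exp_pos ε).le mgf_nonneg) hr hτtail
  exact (tendsto_iSup_measureReal_lt (fun n => ae_of_all _ fun ω => Nat.cast_nonneg _)
    (fun n => integrable_comp_of_le Nat.cast (hNmeas n) (hNle n)) hmean).comp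
    (tendsto_id.atTop_div_const two_pos)

/-- in the infinite-capacity `G/G/∞` system with renewal arrivals `{τₙ}` of
rate `λ ∈ (0,∞)` and i.i.d. service times with finite mean, the number
`Nₙ^{(∞)} = #{i < n : θᵢ > τₙ − τᵢ}` of customers present at the `n`-th arrival has an
everywhere-finite probability generating function; in particular
`P[Nₙ^{(∞)} > ψ/2] → 0` as `ψ → ∞`, uniformly in `n`. -/
theorem gg_infinity_pgf_finite
    {Ω : Type} [MeasurableSpace Ω] (P : Measure Ω) [IsProbabilityMeasure P]
    (τ θ : ℕ → Ω → ℝ)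
    (hτmeas : ∀ n, Measurable (τ n)) (hθmeas : ∀ n, Measurable (θ n))
    (hτpos : ∀ n ω, τ n ω < τ (n + 1) ω)
    (hτident : ∀ n, Measure.map (fun ω => τ (n + 1) ω - τ n ω) P
        = Measure.map (fun ω => τ 1 ω - τ 0 ω) P)
    (hτint : Integrable (fun ω => τ 1 ω - τ 0 ω) P)
    (hrate : 0 < ∫ ω, (τ 1 ω - τ 0 ω) ∂P)
    (hθnonneg : ∀ n ω, 0 ≤ θ n ω)
    (hθident : ∀ n, Measure.map (θ n) P = Measure.map (θ 0) P)
    (hθint : Integrable (θ 0) P)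
    (hindep : iIndepFun
      (fun k => Sum.elim (fun n => fun ω => τ (n + 1) ω - τ n ω) θ k) P)
    -- the number of customers in service at the `n`-th arrival epoch:
    (N : ℕ → Ω → ℕ)
    (hN : ∀ n ω, N n ω
        = ((Finset.range n).filter fun i => τ n ω - τ i ω < θ i ω).card) :
    (∀ z : ℂ, ∀ n, Integrable (fun ω => z ^ N n ω) P) ∧
    Tendsto (fun ψ : ℝ => ⨆ n : ℕ, (P {ω | ψ / 2 < (N n ω : ℝ)}).toReal)
      atTop (nhds 0) :=
  gg_infinity_pgf_finite_general P τ θ hτmeas hθmeas hτpos hτident hθnonneg hθident hθint hindep N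
    hN
end
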